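/- arXiv:2504.05941 — 7 statements merged into one kernel-verified Lean document; each statement's English description precedes it below -/
import Mathlib

section
/- Let v ∈ ℝⁿ with n > 3 have sign pattern sign(v) = [1,…,1 (n₁ times), 0, −1,…,−1 (n₂ times), 0]ᵀ with n₁, n₂ > 0 and n₁+n₂+2 = n. Then for every t (indices mod n), (Δ_c sign(v)_t)² ≥ Δ_c sign(v)_{t−1} · Δ_c sign(v)_{t+1}. -/
open scoped BigOperators

/-- Number of sign changes in a list of reals after deleting zero entries;
`-1` if all entries are zero. -/
noncomputable def signChangesList (l : List ℝ) : ℤ :=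
  let nz := l.filter (fun x => decide (x ≠ 0))
  if nz.isEmpty then -1
  else ((nz.zip nz.tail).countP (fun p => decide (p.1 * p.2 < 0)) : ℤ)

/-- `S⁻(v)`: number of sign changes of `v` after deleting zeros (`-1` for `v = 0`). -/
noncomputable def Sminus {n : ℕ} (v : Fin n → ℝ) : ℤ :=
  signChangesList (List.ofFn v)

/-- `w` is obtained from `v` by replacing (some of the) zero entries by arbitrary reals. -/
def FillsZeros {n : ℕ} (v w : Fin n → ℝ) : Prop := ∀ i, v i ≠ 0 → w i = v i

/-- `S⁺(v)`: maximum of `S⁻` over all fillings of the zero entries of `v`. -/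
noncomputable def Splus {n : ℕ} (v : Fin n → ℝ) : ℤ :=
  sSup {z : ℤ | ∃ w : Fin n → ℝ, FillsZeros v w ∧ z = Sminus w}

/-- the rotated list `[v i, v (i+1), …, v (i+n-1), v i]`. -/
noncomputable def cycList {n : ℕ} (v : Fin n → ℝ) (i : Fin n) : List ℝ :=
  (List.ofFn fun j : Fin n => v (i + j)) ++ [v i]

/-- cyclic variation `S_c⁻(v)`: the supremum of `S⁻` over all cyclic rotations
`[v_i, …, v_n, v_1, …, v_i]` of `v`. -/
noncomputable def Scminus {n : ℕ} (v : Fin n → ℝ) : ℤ :=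
  sSup {z : ℤ | ∃ i : Fin n, z = signChangesList (cycList v i)}

/-- cyclic variation `S_c⁺(v)`: the supremum of `S_c⁻` over all fillings of the
zero entries of `v`. -/
noncomputable def Scplus {n : ℕ} (v : Fin n → ℝ) : ℤ :=
  sSup {z : ℤ | ∃ w : Fin n → ℝ, FillsZeros v w ∧ z = Scminus w}

/-- cyclic successor index `i + 1 (mod n)`. -/
def cnext {n : ℕ} (i : Fin n) : Fin n :=
  ⟨(i.val + 1) % n, Nat.mod_lt _ (Nat.lt_of_le_of_lt (Nat.zero_le _) i.isLt)⟩

/-- cyclic predecessor index `i - 1 (mod n)`. -/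
def cprev {n : ℕ} (i : Fin n) : Fin n :=
  ⟨(i.val + (n - 1)) % n, Nat.mod_lt _ (Nat.lt_of_le_of_lt (Nat.zero_le _) i.isLt)⟩

/-- cyclic forward difference `(Δ_c v)_i = v_{i+1 (mod n)} - v_i`. -/
noncomputable def cdiff {n : ℕ} (v : Fin n → ℝ) : Fin n → ℝ :=
  fun i => v (cnext i) - v i

/-- number of positive entries. -/
noncomputable def Pp {n : ℕ} (v : Fin n → ℝ) : ℕ :=
  (Finset.univ.filter fun i => 0 < v i).card

/-- number of negative entries. -/
noncomputable def Pn {n : ℕ} (v : Fin n → ℝ) : ℕ :=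
  (Finset.univ.filter fun i => v i < 0).card

/-- one period of the `P`-periodic summation `ḡ(t) = ∑_{k ∈ ℤ} g(t + kP)`. -/
noncomputable def pbar (g : ℤ → ℝ) (P : ℕ) : Fin P → ℝ :=
  fun i => ∑' k : ℤ, g (((i : ℕ) : ℤ) + k * (P : ℤ))

/-- convolution `(g ∗ u)(t) = ∑_{τ ∈ ℤ} g(t - τ) u(τ)`. -/
noncomputable def conv (g u : ℤ → ℝ) : ℤ → ℝ :=
  fun t => ∑' τ : ℤ, g (t - τ) * u τ

/-- the cyclic back-shift matrix `Q_P`, mapping `e_j` to `e_{j+1 (mod P)}`. -/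
def Qmat (P : ℕ) : Matrix (Fin P) (Fin P) ℝ :=
  Matrix.of fun i j => if (i : ℕ) = ((j : ℕ) + 1) % P then 1 else 0

/-- If `v ∈ ℝⁿ`, `n > 3`, has the sign pattern `[1,…,1 (n₁), 0, -1,…,-1 (n₂), 0]` with
`n₁, n₂ > 0`, `n₁ + n₂ + 2 = n`, then for every `t` (indices mod `n`):
`(Δ_c sign(v)_t)² ≥ Δ_c sign(v)_{t-1} ⬝ Δ_c sign(v)_{t+1}`. -/
theorem stmt7 {n n₁ n₂ : ℕ} (hn : 3 < n) (h1 : 0 < n₁) (h2 : 0 < n₂)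
    (hsum : n₁ + n₂ + 2 = n) (v : Fin n → ℝ)
    (hsgn : ∀ i : Fin n, Real.sign (v i) =
      if (i : ℕ) < n₁ then 1
      else if (i : ℕ) = n₁ then 0
      else if (i : ℕ) < n₁ + 1 + n₂ then -1
      else 0) :
    ∀ t : Fin n,
      cdiff (fun i => Real.sign (v i)) (cprev t) *
        cdiff (fun i => Real.sign (v i)) (cnext t) ≤
      (cdiff (fun i => Real.sign (v i)) t) ^ 2 := by

  intro t
  have key : ∀ u : Fin n, cdiff (fun i => Real.sign (v i)) u =
      if (u : ℕ) = n₁ - 1 ∨ (u : ℕ) = n₁ then -1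
      else if (u : ℕ) = n₁ + n₂ ∨ (u : ℕ) = n - 1 then 1 else 0 := by
    intro u
    have hu := u.isLt
    have hnext : ((cnext u : Fin n) : ℕ) = if (u : ℕ) = n - 1 then 0 else (u : ℕ) + 1 := by
      simp only [cnext]
      split
      · next h =>
          have : (u : ℕ) + 1 = n := by omega
          rw [this, Nat.mod_self]
      · next h => exact Nat.mod_eq_of_lt (by omega)
    simp only [cdiff, hsgn, hnext]
    split_ifs <;> first | omega | norm_num
  have ht := t.isLt
  have hprev : ((cprev t : Fin n) : ℕ) = if (t : ℕ) = 0 then n - 1 else (t : ℕ) - 1 := by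
    simp only [cprev]
    split
    · next h =>
        have : (t : ℕ) + (n - 1) = n - 1 := by omega
        rw [this]; exact Nat.mod_eq_of_lt (by omega)
    · next h =>
        have : (t : ℕ) + (n - 1) = ((t : ℕ) - 1) + n := by omega
        rw [this, Nat.add_mod_right]
        exact Nat.mod_eq_of_lt (by omega)
  have hnextt : ((cnext t : Fin n) : ℕ) = if (t : ℕ) = n - 1 then 0 else (t : ℕ) + 1 := by
    simp only [cnext]
    split
    · next h =>
        have : (t : ℕ) + 1 = n := by omega
        rw [this, Nat.mod_self]
    · next h => exact Nat.mod_eq_of_lt (by omega)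
  rw [key, key, key, hprev, hnextt]
  split_ifs <;> first | omega | norm_num
end

section
/- Let P > 1 be even, let ĝ ∈ ℝ^P be strictly positive and strictly monotonically decreasing (ĝ₁ > ĝ₂ > ⋯ > ĝ_P > 0), and let û = [1,…,1 (P/2−1 times), 0, −1,…,−1 (P/2−1 times), 0]ᵀ. Then for no index t can both (H_û ĝ)_{t+1} − (H_û ĝ)_t = 0 and (H_û ĝ)_{t+1} + (H_û ĝ)_t = 0 hold simultaneously (indices cyclic mod P). -/
open scoped BigOperators

open Fin.NatCast in
/-- For even `P = 2n > 1`, strictly positive strictly decreasing `ĝ ∈ ℝ^P` and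
`û = [1,…,1 (n-1), 0, -1,…,-1 (n-1), 0]`, no index `t` can satisfy both
`(H_û ĝ)_{t+1} - (H_û ĝ)_t = 0` and `(H_û ĝ)_{t+1} + (H_û ĝ)_t = 0` (indices mod `P`). -/
theorem stmt9 (n : ℕ) (hn : 2 ≤ n) (g : Fin (2 * n) → ℝ)
    (hpos : ∀ i, 0 < g i) (hdec : ∀ i j : Fin (2 * n), i < j → g j < g i)
    (u : Fin (2 * n) → ℝ)
    (hu : u = fun i : Fin (2 * n) =>
      if (i : ℕ) < n - 1 then 1
      else if (i : ℕ) = n - 1 then 0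
      else if (i : ℕ) < 2 * n - 1 then -1
      else 0) :
    ∀ t : Fin (2 * n),
      ¬(((Matrix.circulant u).mulVec g) (cnext t) - ((Matrix.circulant u).mulVec g) t = 0 ∧
        ((Matrix.circulant u).mulVec g) (cnext t) + ((Matrix.circulant u).mulVec g) t = 0) := by
  haveI : NeZero (2 * n) := ⟨by omega⟩
  intro t ht
  obtain ⟨h1, h2⟩ := ht
  set y := (Matrix.circulant u).mulVec g with hy
  have hyt : y t = 0 := by linarith
  set nn : Fin (2 * n) := ⟨n, by omega⟩ with hnn
  have hone : ((1 : Fin (2 * n)) : ℕ) = 1 := by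
    have : ((1 : Fin (2 * n)) : ℕ) = 1 % (2 * n) := rfl
    rw [this, Nat.mod_eq_of_lt (by omega)]
  have hnn0 : nn + nn = 0 := by
    apply Fin.ext
    rw [Fin.val_add]
    show (n + n) % (2 * n) = (0 : Fin (2 * n)).val
    rw [show n + n = 2 * n by ring, Nat.mod_self]
    rfl
  set d : Fin (2 * n) → ℝ := fun m => g m - g (m + nn) with hd
  have hvaladd : ∀ m : Fin (2 * n), ((m + nn : Fin (2 * n)) : ℕ)
      = if (m : ℕ) < n then (m : ℕ) + n else (m : ℕ) - n := by
    intro m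
    rw [Fin.val_add]
    show ((m : ℕ) + n) % (2 * n) = _
    rcases lt_or_ge (m : ℕ) n with hm | hm
    · rw [if_pos hm, Nat.mod_eq_of_lt (by omega)]
    · rw [if_neg (by omega), show (m : ℕ) + n = 2 * n + ((m : ℕ) - n) by omega,
        Nat.add_mod_left, Nat.mod_eq_of_lt (by have := m.isLt; omega)]
  have hdpos : ∀ m : Fin (2 * n), (m : ℕ) < n → 0 < d m := by
    intro m hm
    have h2' : ((m + nn : Fin (2 * n)) : ℕ) = (m : ℕ) + n := by rw [hvaladd, if_pos hm]
    have : g (m + nn) < g m := hdec m (m + nn) (by rw [Fin.lt_def, h2']; omega)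
    simp only [hd]
    linarith
  have hdneg : ∀ m : Fin (2 * n), n ≤ (m : ℕ) → d m < 0 := by
    intro m hm
    have h2' : ((m + nn : Fin (2 * n)) : ℕ) = (m : ℕ) - n := by
      rw [hvaladd, if_neg (by omega)]
    have : g m < g (m + nn) := hdec (m + nn) m (by rw [Fin.lt_def, h2']; omega)
    simp only [hd]
    linarith
  have hdflip : ∀ m : Fin (2 * n), d (m + nn) = -d m := by
    intro m
    have hmm : m + nn + nn = m := by rw [add_assoc, hnn0, add_zero]
    simp only [hd, hmm]
    ring
  have huval : ∀ i : ℕ, i < 2 * n → u ((i : Fin (2 * n))) =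
      if i < n - 1 then 1 else if i = n - 1 then 0 else if i < 2 * n - 1 then -1 else 0 := by
    intro i hi
    have hv : (((i : Fin (2 * n))) : ℕ) = i := by
      rw [Fin.val_natCast, Nat.mod_eq_of_lt hi]
    rw [hu]
    simp only [hv]
  have hyformula : ∀ s : Fin (2 * n),
      y s = ∑ i ∈ Finset.range (n - 1), d (s - (i : Fin (2 * n))) := by
    intro s
    have e1 : y s = ∑ j : Fin (2 * n), u (s - j) * g j := by
      simp [hy, Matrix.mulVec, dotProduct, Matrix.circulant_apply]
    have e2 : ∑ j : Fin (2 * n), u (s - j) * g j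
        = ∑ j : Fin (2 * n), u j * g (s - j) := by
      apply Fintype.sum_equiv (Equiv.subLeft s)
      intro j
      simp [Equiv.subLeft, sub_sub_cancel]
    have e3 : ∑ j : Fin (2 * n), u j * g (s - j)
        = ∑ i ∈ Finset.range (2 * n), u (i : Fin (2 * n)) * g (s - (i : Fin (2 * n))) := by
      rw [← Fin.sum_univ_eq_sum_range (fun i : ℕ => u (i : Fin (2 * n)) * g (s - (i : Fin (2 * n))))]
      apply Finset.sum_congr rfl
      intro j _
      rw [Fin.cast_val_eq_self]
    have e4 : ∀ i ∈ Finset.range (2 * n),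
        u (i : Fin (2 * n)) * g (s - (i : Fin (2 * n)))
        = (if i < n - 1 then g (s - (i : Fin (2 * n))) else 0)
          + (if n ≤ i ∧ i < 2 * n - 1 then -g (s - (i : Fin (2 * n))) else 0) := by
      intro i hi
      rw [huval i (Finset.mem_range.mp hi)]
      split_ifs <;> first | ring1 | (exfalso; omega)
    have e5 : ∑ i ∈ Finset.range (2 * n), (if i < n - 1 then g (s - (i : Fin (2 * n))) else 0)
        = ∑ i ∈ Finset.range (n - 1), g (s - (i : Fin (2 * n))) := by
      rw [← Finset.sum_filter]
      congr 1
      ext i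
      simp only [Finset.mem_filter, Finset.mem_range]
      omega
    have e6 : ∑ i ∈ Finset.range (2 * n),
          (if n ≤ i ∧ i < 2 * n - 1 then -g (s - (i : Fin (2 * n))) else 0)
        = ∑ i ∈ Finset.range (n - 1), -g (s - (i : Fin (2 * n)) + nn) := by
      rw [← Finset.sum_filter]
      have hf : (Finset.range (2 * n)).filter (fun i => n ≤ i ∧ i < 2 * n - 1)
          = Finset.Ico n (2 * n - 1) := by
        ext i
        simp only [Finset.mem_filter, Finset.mem_range, Finset.mem_Ico]
        omega
      rw [hf, Finset.sum_Ico_eq_sum_range, show 2 * n - 1 - n = n - 1 by omega]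
      apply Finset.sum_congr rfl
      intro i hi
      have hi' : i < n - 1 := Finset.mem_range.mp hi
      have hcast : ((n + i : ℕ) : Fin (2 * n)) = (i : Fin (2 * n)) + nn := by
        apply Fin.ext
        rw [Fin.val_natCast, Fin.val_add, Fin.val_natCast]
        show (n + i) % (2 * n) = (i % (2 * n) + n) % (2 * n)
        rw [Nat.mod_eq_of_lt (show i < 2 * n by omega), Nat.add_comm]
      rw [hcast]
      have hneg : -nn = nn := by
        rw [neg_eq_iff_add_eq_zero, hnn0]
      congr 1
      rw [sub_add_eq_sub_sub, sub_eq_add_neg (s - (i : Fin (2 * n))), hneg]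
    rw [e1, e2, e3, Finset.sum_congr rfl e4, Finset.sum_add_distrib, e5, e6,
      ← Finset.sum_add_distrib]
    apply Finset.sum_congr rfl
    intro i _
    simp only [hd]
    ring
  have hsubval : ∀ (s : Fin (2 * n)) (i : ℕ), i ≤ (s : ℕ) →
      (s - (i : Fin (2 * n))).val = (s : ℕ) - i := by
    intro s i hi
    have hi2 : i < 2 * n := by have := s.isLt; omega
    have hle : ((i : Fin (2 * n))) ≤ s := by
      rw [Fin.le_def, Fin.val_natCast, Nat.mod_eq_of_lt hi2]
      exact hi
    rw [Fin.sub_val_of_le hle, Fin.val_natCast, Nat.mod_eq_of_lt hi2]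
  have hne : (Finset.range (n - 1)).Nonempty := ⟨0, Finset.mem_range.mpr (by omega)⟩
  by_cases hc1 : (t : ℕ) = n - 2
  · have hpos' : 0 < y t := by
      rw [hyformula]
      apply Finset.sum_pos
      · intro i hi
        have hi' : i < n - 1 := Finset.mem_range.mp hi
        apply hdpos
        rw [hsubval t i (by omega)]
        omega
      · exact hne
    linarith
  by_cases hc2 : (t : ℕ) = 2 * n - 2
  · have hneg' : y t < 0 := by
      rw [hyformula]
      have := Finset.sum_lt_sum_of_nonempty hne
        (f := fun i : ℕ => d (t - (i : Fin (2 * n)))) (g := fun _ => (0 : ℝ)) ?_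
      · simpa using this
      · intro i hi
        have hi' : i < n - 1 := Finset.mem_range.mp hi
        apply hdneg
        rw [hsubval t i (by omega)]
        omega
    linarith
  · -- generic case: the difference is nonzero
    have hcn : cnext t = t + 1 := by
      apply Fin.ext
      rw [Fin.val_add, hone]
      rfl
    set f : ℕ → ℝ := fun i => d (t + 1 - (i : Fin (2 * n))) with hf
    have tele : ∀ m : ℕ,
        (∑ i ∈ Finset.range m, f i) - (∑ i ∈ Finset.range m, f (i + 1)) = f 0 - f m := by
      intro m
      induction m with
      | zero => simp
      | succ k ih =>
          rw [Finset.sum_range_succ, Finset.sum_range_succ (fun i => f (i + 1))]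
          have : (∑ i ∈ Finset.range k, f i) - (∑ i ∈ Finset.range k, f (i + 1))
              = f 0 - f k := ih
          linarith
    have key : ∀ i : ℕ, d (t - (i : Fin (2 * n))) = f (i + 1) := by
      intro i
      simp only [hf]
      congr 1
      push_cast
      abel
    have hlast : f (n - 1) = -d (t + 1 + 1) := by
      have hz : ((n - 1 : ℕ) : Fin (2 * n)) + (1 + nn) = 0 := by
        apply Fin.ext
        rw [Fin.val_add, Fin.val_add, Fin.val_natCast, hone]
        show (((n - 1) % (2 * n)) + (1 + n) % (2 * n)) % (2 * n) = (0 : Fin (2 * n)).val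
        rw [Nat.mod_eq_of_lt (show n - 1 < 2 * n by omega),
          Nat.mod_eq_of_lt (show 1 + n < 2 * n by omega),
          show (n - 1) + (1 + n) = 2 * n by omega, Nat.mod_self]
        rfl
      have : t + 1 - ((n - 1 : ℕ) : Fin (2 * n)) = t + 1 + 1 + nn := by
        rw [sub_eq_iff_eq_add]
        calc t + 1 = t + 1 + 0 := by rw [add_zero]
          _ = t + 1 + (((n - 1 : ℕ) : Fin (2 * n)) + (1 + nn)) := by rw [hz]
          _ = t + 1 + 1 + nn + ((n - 1 : ℕ) : Fin (2 * n)) := by abel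
      simp only [hf]
      rw [this, hdflip]
    have hdiff : y (cnext t) - y t = d (t + 1) + d (t + 1 + 1) := by
      rw [hcn, hyformula, hyformula]
      have hB : ∑ i ∈ Finset.range (n - 1), d (t - (i : Fin (2 * n)))
          = ∑ i ∈ Finset.range (n - 1), f (i + 1) :=
        Finset.sum_congr rfl (fun i _ => key i)
      have hA : ∑ i ∈ Finset.range (n - 1), d (t + 1 - (i : Fin (2 * n)))
          = ∑ i ∈ Finset.range (n - 1), f i := rfl
      rw [hA, hB, tele (n - 1), hlast]
      have hf0 : f 0 = d (t + 1) := by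
        simp only [hf, Nat.cast_zero, sub_zero]
      rw [hf0]
      ring
    have hz : d (t + 1) + d (t + 1 + 1) = 0 := by rw [← hdiff, h1]
    have ha2 : ((t + 1 : Fin (2 * n)) : ℕ) < 2 * n := (t + 1 : Fin (2 * n)).isLt
    have hva : ((t + 1 : Fin (2 * n)) : ℕ)
        = if (t : ℕ) + 1 < 2 * n then (t : ℕ) + 1 else 0 := by
      rw [Fin.val_add, hone]
      rcases lt_or_ge ((t : ℕ) + 1) (2 * n) with h | h
      · rw [if_pos h, Nat.mod_eq_of_lt h]
      · have : (t : ℕ) + 1 = 2 * n := by have := t.isLt; omega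
        rw [if_neg (by omega), this, Nat.mod_self]
    have hvb : ((t + 1 + 1 : Fin (2 * n)) : ℕ)
        = if ((t + 1 : Fin (2 * n)) : ℕ) + 1 < 2 * n
          then ((t + 1 : Fin (2 * n)) : ℕ) + 1 else 0 := by
      rw [Fin.val_add ((t + 1 : Fin (2 * n))), hone]
      rcases lt_or_ge (((t + 1 : Fin (2 * n)) : ℕ) + 1) (2 * n) with h | h
      · rw [if_pos h, Nat.mod_eq_of_lt h]
      · have : ((t + 1 : Fin (2 * n)) : ℕ) + 1 = 2 * n := by omega
        rw [if_neg (by omega), this, Nat.mod_self]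
    have hcases : (((t + 1 : Fin (2 * n)) : ℕ) < n ∧ ((t + 1 + 1 : Fin (2 * n)) : ℕ) < n)
        ∨ (n ≤ ((t + 1 : Fin (2 * n)) : ℕ) ∧ n ≤ ((t + 1 + 1 : Fin (2 * n)) : ℕ)) := by
      have := t.isLt
      split_ifs at hva hvb <;> omega
    rcases hcases with ⟨ha, hb⟩ | ⟨ha, hb⟩
    · have p1 := hdpos (t + 1) ha
      have p2 := hdpos (t + 1 + 1) hb
      linarith
    · have p1 := hdneg (t + 1) ha
      have p2 := hdneg (t + 1 + 1) hb
      linarith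
end

section
/- Let g : ℤ → ℝ satisfy g ∈ ℓ¹, g(0) > 0, with connected support {0,1,2,…} on which g is strictly positive and strictly decreasing. Then there is no P > 1 and no u ∈ ℓ∞(P) with S_c⁻(Δ_c u^P) = 2 and S_c⁺(u^P) = 2 satisfying u = −C_g(sign(u)), i.e., the discrete-time relay feedback system admits no unimodal self-oscillation. -/
open scoped BigOperators

lemma sign_abs_le (x : ℝ) : |Real.sign x| ≤ 1 := by
  rcases lt_trichotomy x 0 with h | h | h
  · rw [Real.sign_of_neg h]; norm_num
  · rw [h, Real.sign_zero]; norm_num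
  · rw [Real.sign_of_pos h]; norm_num

lemma keyA (g : ℤ → ℝ) (hg : Summable g) (t : ℤ) : Summable (fun τ => g (t - τ)) :=
  (Equiv.subLeft t).summable_iff.mpr hg

lemma keyB (g : ℤ → ℝ) (hg : Summable g) (s : ℤ → ℝ) (hs : ∀ τ, |s τ| ≤ 1) (t : ℤ) :
    Summable (fun τ => g (t - τ) * s τ) := by
  apply summable_abs_iff.mp
  refine Summable.of_nonneg_of_le (fun _ => abs_nonneg _) ?_ ((keyA g hg t).abs)
  intro τ
  rw [abs_mul]
  calc |g (t - τ)| * |s τ| ≤ |g (t - τ)| * 1 :=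
        mul_le_mul_of_nonneg_left (hs τ) (abs_nonneg _)
    _ = |g (t - τ)| := mul_one _

lemma key (g : ℤ → ℝ) (hg : Summable g) (hg0 : 0 < g 0)
    (hgneg : ∀ x : ℤ, x < 0 → g x = 0)
    (hgnn : ∀ x : ℤ, 0 ≤ g x)
    (hdec : ∀ t : ℤ, 0 ≤ t → g (t + 1) < g t)
    (P : ℕ) (hP : 0 < P) (u : ℤ → ℝ)
    (hper : ∀ t : ℤ, u (t + P) = u t)
    (heq : ∀ t, u t = -conv g (fun τ => Real.sign (u τ)) t) :
    ∀ t, u t ≤ 0 := by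
  set s : ℤ → ℝ := fun τ => Real.sign (u τ) with hs_def
  have hs : ∀ τ, |s τ| ≤ 1 := fun τ => sign_abs_le _
  have hs1 : ∀ τ, s τ ≤ 1 := fun τ => le_trans (le_abs_self _) (hs τ)
  -- summable of w
  have hWs : ∀ t : ℤ, Summable (fun τ => (g (t - τ) - g (t + 1 - τ))) :=
    fun t => (keyA g hg t).sub (keyA g hg (t + 1))
  have hWsum : ∀ t : ℤ, (∑' τ : ℤ, (g (t - τ) - g (t + 1 - τ))) = 0 := by
    intro t
    rw [Summable.tsum_sub (keyA g hg t) (keyA g hg (t + 1))]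
    have e1 : (∑' τ : ℤ, g (t - τ)) = ∑' τ : ℤ, g τ := (Equiv.subLeft t).tsum_eq g
    have e2 : (∑' τ : ℤ, g (t + 1 - τ)) = ∑' τ : ℤ, g τ := (Equiv.subLeft (t + 1)).tsum_eq g
    rw [e1, e2, sub_self]
  -- not all positive
  have h_not_all_pos : ¬ (∀ τ, 0 < u τ) := by
    intro hall
    have hsall : ∀ τ, s τ = 1 := fun τ => Real.sign_of_pos (hall τ)
    have h0 : u 0 = -(∑' τ : ℤ, g (0 - τ)) := by
      rw [heq 0]
      unfold conv
      congr 1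
      exact tsum_congr fun τ => by rw [hsall τ, mul_one]
    have h1 : (∑' τ : ℤ, g (0 - τ)) = ∑' τ : ℤ, g τ := (Equiv.subLeft 0).tsum_eq g
    have h2 : g 0 ≤ ∑' τ : ℤ, g τ := Summable.le_tsum hg 0 (fun j _ => hgnn j)
    have := hall 0
    rw [h0, h1] at this
    linarith
  -- the main step
  have step : ∀ t : ℤ, 0 < u (t + 1) → (∃ τ0, τ0 ≤ t ∧ u τ0 ≤ 0) → u (t + 1) < u t := by
    intro t ht1 ⟨τ0, hτ0t, hτ0⟩
    have hst1 : s (t + 1) = 1 := Real.sign_of_pos ht1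
    have hws : Summable (fun τ => (g (t - τ) - g (t + 1 - τ)) * s τ) := by
      have h1 := keyB g hg s hs t
      have h2 := keyB g hg s hs (t + 1)
      have := h1.sub h2
      apply this.congr
      intro τ; ring
    have hDu : u (t + 1) - u t = ∑' τ : ℤ, (g (t - τ) - g (t + 1 - τ)) * s τ := by
      rw [heq (t + 1), heq t]
      unfold conv
      rw [neg_sub_neg, ← Summable.tsum_sub (keyB g hg s hs t) (keyB g hg s hs (t + 1))]
      exact tsum_congr fun τ => by ring
    have hD2 : u (t + 1) - u t = ∑' τ : ℤ, (g (t - τ) - g (t + 1 - τ)) * (s τ - 1) := by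
      rw [hDu]
      have : (∑' τ : ℤ, (g (t - τ) - g (t + 1 - τ)) * (s τ - 1))
          = (∑' τ : ℤ, (g (t - τ) - g (t + 1 - τ)) * s τ)
            - (∑' τ : ℤ, (g (t - τ) - g (t + 1 - τ))) := by
        rw [← Summable.tsum_sub hws (hWs t)]
        exact tsum_congr fun τ => by ring
      rw [this, hWsum t, sub_zero]
    -- positivity of w on τ ≤ t
    have hwpos : ∀ τ : ℤ, τ ≤ t → 0 < g (t - τ) - g (t + 1 - τ) := by
      intro τ hτ
      have h0 : (0:ℤ) ≤ t - τ := by omega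
      have := hdec (t - τ) h0
      have e : t - τ + 1 = t + 1 - τ := by ring
      rw [e] at this
      linarith
    have hle : ∀ τ : ℤ, (g (t - τ) - g (t + 1 - τ)) * (s τ - 1) ≤ 0 := by
      intro τ
      rcases le_or_gt τ t with h | h
      · exact mul_nonpos_of_nonneg_of_nonpos (le_of_lt (hwpos τ h)) (by linarith [hs1 τ])
      · rcases eq_or_lt_of_le (Int.add_one_le_of_lt h) with h' | h'
        · rw [← h', hst1]; simp
        · have e1 : g (t - τ) = 0 := hgneg _ (by omega)
          have e2 : g (t + 1 - τ) = 0 := hgneg _ (by omega)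
          rw [e1, e2]; ring_nf; simp
    have hlt0 : (g (t - τ0) - g (t + 1 - τ0)) * (s τ0 - 1) < 0 := by
      apply mul_neg_of_pos_of_neg (hwpos τ0 hτ0t)
      have : s τ0 ≤ 0 := by
        rcases lt_or_eq_of_le hτ0 with h | h
        · rw [hs_def]; simp only; rw [Real.sign_of_neg h]; norm_num
        · rw [hs_def]; simp only; rw [h, Real.sign_zero]
      linarith
    have hsum2 : Summable (fun τ : ℤ => (g (t - τ) - g (t + 1 - τ)) * (s τ - 1)) := by
      have := hws.sub (hWs t)
      apply this.congr
      intro τ; ring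
    have : (∑' τ : ℤ, (g (t - τ) - g (t + 1 - τ)) * (s τ - 1)) < ∑' _ : ℤ, (0:ℝ) :=
      Summable.tsum_lt_tsum (i := τ0) hle hlt0 hsum2 summable_zero
    rw [tsum_zero] at this
    linarith [hD2 ▸ this]
  -- periodicity backwards
  have hperk : ∀ (k : ℕ) (τ : ℤ), u (τ - k * P) = u τ := by
    intro k
    induction k with
    | zero => intro τ; simp
    | succ k ih =>
      intro τ
      have e : τ - (k + 1 : ℕ) * P + P = τ - k * P := by push_cast; ring
      have := hper (τ - ((k + 1 : ℕ) : ℤ) * P)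
      rw [e] at this
      rw [← this]
      exact ih τ
  have hlow : (∃ τ1, u τ1 ≤ 0) → ∀ t : ℤ, ∃ τ0, τ0 ≤ t ∧ u τ0 ≤ 0 := by
    rintro ⟨τ1, hτ1⟩ t
    refine ⟨τ1 - (τ1 - t).toNat * P, ?_, by rw [hperk]; exact hτ1⟩
    have h1 : (τ1 - t : ℤ) ≤ ((τ1 - t).toNat : ℤ) := Int.self_le_toNat _
    have h2 : ((τ1 - t).toNat : ℤ) ≤ ((τ1 - t).toNat : ℤ) * P := by
      have : (1:ℤ) ≤ P := by exact_mod_cast hP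
      nlinarith [Int.ofNat_nonneg (τ1 - t).toNat]
    omega
  -- main argument
  intro t
  by_contra hc
  push_neg at hc
  have hex : ∃ τ1, u τ1 ≤ 0 := by
    by_contra h
    push_neg at h
    exact h_not_all_pos h
  have hlow' := hlow hex
  have chain : ∀ k : ℕ, u t ≤ u (t - k) ∧ 0 < u (t - k) := by
    intro k
    induction k with
    | zero =>
      simp only [Nat.cast_zero, sub_zero]
      exact ⟨le_refl _, hc⟩
    | succ k ih =>
      have e : t - (k:ℤ) - 1 + 1 = t - k := by ring
      have h1 : 0 < u (t - (k:ℤ) - 1 + 1) := by rw [e]; exact ih.2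
      have hstep := step (t - (k:ℤ) - 1) h1 (hlow' _)
      rw [e] at hstep
      have e2 : t - ((k + 1 : ℕ) : ℤ) = t - (k:ℤ) - 1 := by push_cast; ring
      rw [e2]
      exact ⟨le_of_lt (lt_of_le_of_lt ih.1 hstep), lt_trans ih.2 hstep⟩
  -- final contradiction
  have hPm1 : ((P - 1 : ℕ) : ℤ) = (P:ℤ) - 1 := by
    have : 1 ≤ P := hP
    push_cast [this]; ring
  have h1 : 0 < u (t - (P:ℤ) + 1) := by
    have := (chain (P - 1)).2
    rw [hPm1] at this
    have e : t - ((P:ℤ) - 1) = t - (P:ℤ) + 1 := by ring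
    rw [e] at this
    exact this
  have h2 : u t ≤ u (t - (P:ℤ) + 1) := by
    have := (chain (P - 1)).1
    rw [hPm1] at this
    have e : t - ((P:ℤ) - 1) = t - (P:ℤ) + 1 := by ring
    rw [e] at this
    exact this
  have e3 : t - (P:ℤ) + 1 = t - (P:ℤ) + 1 := rfl
  have hstep := step (t - (P:ℤ)) h1 (hlow' _)
  have hper1 : u (t - (P:ℤ)) = u t := by
    have := hperk 1 t
    simpa using this
  rw [hper1] at hstep
  linarith

/-- If `g ∈ ℓ¹`, `g(0) > 0`, has support `{0,1,2,…}` on which it is strictly positive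
and strictly decreasing, then the discrete-time relay feedback system admits no
unimodal self-oscillation: there are no `P > 1` and `u ∈ ℓ∞(P)` with
`S_c⁻(Δ_c u^P) = 2`, `S_c⁺(u^P) = 2` and `u = -C_g(sign(u))`. -/
theorem stmt11 (g : ℤ → ℝ) (hg : Summable g) (hg0 : 0 < g 0)
    (hsupp : Function.support g = {t : ℤ | 0 ≤ t})
    (hpos : ∀ t : ℤ, 0 ≤ t → 0 < g t)
    (hdec : ∀ t : ℤ, 0 ≤ t → g (t + 1) < g t) :
    ¬ ∃ (P : ℕ) (u : ℤ → ℝ), 1 < P ∧ (∃ C : ℝ, ∀ t, |u t| ≤ C) ∧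
      (∀ t : ℤ, u (t + P) = u t) ∧
      Scminus (cdiff fun i : Fin P => u ((i : ℕ) : ℤ)) = 2 ∧
      Scplus (fun i : Fin P => u ((i : ℕ) : ℤ)) = 2 ∧
      (∀ t : ℤ, u t = -conv g (fun τ => Real.sign (u τ)) t) := by
  rintro ⟨P, u, hP1, _hbd, hper, hScm, _hScp, heq⟩
  have hgneg : ∀ x : ℤ, x < 0 → g x = 0 := by
    intro x hx
    by_contra h
    have hx' : x ∈ Function.support g := h
    rw [hsupp] at hx'
    simp only [Set.mem_setOf_eq] at hx'
    omega
  have hgnn : ∀ x : ℤ, 0 ≤ g x := by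
    intro x
    rcases le_or_gt 0 x with h | h
    · exact (hpos x h).le
    · rw [hgneg x h]
  have hP : 0 < P := by omega
  have hneg : ∀ t, u t ≤ 0 := key g hg hg0 hgneg hgnn hdec P hP u hper heq
  have hper' : ∀ t : ℤ, (fun t => -u t) (t + P) = (fun t => -u t) t := by
    intro t; simp [hper t]
  have heq' : ∀ t : ℤ, (fun t => -u t) t =
      -conv g (fun τ => Real.sign ((fun t => -u t) τ)) t := by
    intro t
    simp only
    have h1 : (fun τ : ℤ => Real.sign (-u τ)) = fun τ => -Real.sign (u τ) := by
      funext τ; exact Real.sign_neg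
    have h2 : conv g (fun τ => -Real.sign (u τ)) t = -conv g (fun τ => Real.sign (u τ)) t := by
      unfold conv
      rw [← tsum_neg]
      exact tsum_congr fun τ => by ring
    rw [h1, h2, heq t]
  have hpos' : ∀ t, 0 ≤ u t := by
    intro t
    have := key g hg hg0 hgneg hgnn hdec P hP (fun t => -u t) hper' heq' t
    simpa using this
  have uz : ∀ t, u t = 0 := fun t => le_antisymm (hneg t) (hpos' t)
  have hv : (cdiff fun i : Fin P => u ((i : ℕ) : ℤ)) = fun _ : Fin P => (0:ℝ) := by
    funext i
    simp [cdiff, uz]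
  rw [hv] at hScm
  have hcyc : ∀ i : Fin P, signChangesList (cycList (fun _ : Fin P => (0:ℝ)) i) = -1 := by
    intro i
    have hfil : (cycList (fun _ : Fin P => (0:ℝ)) i).filter (fun x => decide (x ≠ 0)) = [] := by
      rw [List.filter_eq_nil_iff]
      intro a ha
      have ha0 : a = 0 := by
        simp only [cycList, List.mem_append, List.mem_ofFn, List.mem_singleton] at ha
        rcases ha with h | h
        · obtain ⟨j, hj⟩ := h
          exact hj.symm
        · exact h
      simp [ha0]
    unfold signChangesList
    simp only [hfil, List.isEmpty_nil, if_true]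
  have hset : {z : ℤ | ∃ i : Fin P, z = signChangesList (cycList (fun _ : Fin P => (0:ℝ)) i)}
      = {-1} := by
    ext z
    simp only [Set.mem_setOf_eq, Set.mem_singleton_iff]
    constructor
    · rintro ⟨i, rfl⟩; exact hcyc i
    · rintro rfl; exact ⟨⟨0, by omega⟩, (hcyc _).symm⟩
  have : Scminus (fun _ : Fin P => (0:ℝ)) = -1 := by
    unfold Scminus
    rw [hset, csSup_singleton]
  rw [this] at hScm
  exact absurd hScm (by norm_num)
end

section
/- Consider the delayed relay feedback system u^P = −Q_P^{P_d} H_{ḡ₀^P} sign(u^P) with delay P_d ≥ 1 and g₀ ∈ ℓ¹ strictly positive and strictly decreasing on its support {0,1,2,…}. If u ∈ ℓ∞(P) is a self-oscillation with S_c⁻(Δ_c u^P) = 2, S_c⁺(u^P) = 2, and P ≥ P_d, then P ≥ 2 P_d. -/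
open scoped BigOperators

open Fin.NatCast Fin.CommRing

/-- count of adjacent sign changes in a list -/
noncomputable def cntSC (l : List ℝ) : ℕ := (l.zip l.tail).countP (fun p => decide (p.1 * p.2 < 0))

lemma cntSC_nil : cntSC [] = 0 := rfl
lemma cntSC_single (a : ℝ) : cntSC [a] = 0 := rfl

lemma cntSC_cons_cons (a b : ℝ) (t : List ℝ) :
    cntSC (a :: b :: t) = (if a * b < 0 then 1 else 0) + cntSC (b :: t) := by
  simp [cntSC, List.countP_cons]
  by_cases h : a * b < 0 <;> simp [h] <;> omega

lemma tri (x a h : ℝ) (ha : a ≠ 0) (hxh : x * h < 0) : x * a < 0 ∨ a * h < 0 := by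
  by_contra hc
  push_neg at hc
  obtain ⟨h1, h2⟩ := hc
  have := mul_nonneg h1 h2
  have ha2 : 0 < a * a := mul_self_pos.mpr ha
  have h3 : x * h * (a * a) < 0 := mul_neg_of_neg_of_pos hxh ha2
  nlinarith [mul_nonneg h1 h2]

lemma cntSC_cons_le (a : ℝ) (l : List ℝ) : cntSC l ≤ cntSC (a :: l) := by
  cases l with
  | nil => simp [cntSC_nil, cntSC_single]
  | cons b t => rw [cntSC_cons_cons]; omega

lemma cntSC_mono_aux : ∀ {l1 l2 : List ℝ}, l1.Sublist l2 → (∀ x ∈ l2, x ≠ 0) →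
    ∀ x : ℝ, cntSC (x :: l1) ≤ cntSC (x :: l2) := by
  intro l1 l2 h
  induction h with
  | slnil => intro _ x; exact le_refl _
  | @cons l1' l2' a h ih =>
    intro hnz x
    have ha : a ≠ 0 := hnz a (List.mem_cons_self)
    have hnz2 : ∀ y ∈ l2', y ≠ 0 := fun y hy => hnz y (List.mem_cons_of_mem _ hy)
    refine le_trans (ih hnz2 x) ?_
    cases l2' with
    | nil => simp [cntSC_single]
    | cons b t =>
      have hb : b ≠ 0 := hnz2 b (List.mem_cons_self)
      rw [cntSC_cons_cons, cntSC_cons_cons, cntSC_cons_cons]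
      by_cases hxb : x * b < 0
      · rcases tri x a b ha hxb with h1 | h2
        · simp [h1, hxb]; try omega
        · simp [h2, hxb]; try omega
      · simp [hxb]; omega
  | @cons_cons l1' l2' a h ih =>
    intro hnz x
    have hnz2 : ∀ y ∈ l2', y ≠ 0 := fun y hy => hnz y (List.mem_cons_of_mem _ hy)
    rw [cntSC_cons_cons, cntSC_cons_cons]
    exact Nat.add_le_add_left (ih hnz2 a) _

lemma cntSC_mono : ∀ {l1 l2 : List ℝ}, l1.Sublist l2 → (∀ x ∈ l2, x ≠ 0) →
    cntSC l1 ≤ cntSC l2 := by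
  intro l1 l2 h
  induction h with
  | slnil => intro _; exact le_refl _
  | @cons l1' l2' a h ih =>
    intro hnz
    exact le_trans (ih fun y hy => hnz y (List.mem_cons_of_mem _ hy)) (cntSC_cons_le a _)
  | @cons_cons l1' l2' a h ih =>
    intro hnz
    exact cntSC_mono_aux h (fun y hy => hnz y (List.mem_cons_of_mem _ hy)) a

lemma cntSC_le_length (l : List ℝ) : cntSC l ≤ l.length :=
  le_trans List.countP_le_length (by simp [List.length_zip]; try omega)

lemma signChangesList_eq (l : List ℝ) :
    signChangesList l = if (l.filter (fun x => decide (x ≠ 0))).isEmpty then -1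
      else ((cntSC (l.filter (fun x => decide (x ≠ 0)))) : ℤ) := rfl

lemma signChangesList_le (l : List ℝ) : signChangesList l ≤ (l.length : ℤ) := by
  rw [signChangesList_eq]
  split
  · omega
  · exact_mod_cast le_trans (cntSC_le_length _) (List.length_filter_le _ _)

lemma le_signChangesList {l sub : List ℝ} (h : sub.Sublist l) (hne : sub ≠ [])
    (hnz : ∀ x ∈ sub, x ≠ 0) : (cntSC sub : ℤ) ≤ signChangesList l := by
  have hsub' : sub.Sublist (l.filter (fun x => decide (x ≠ 0))) := by
    have heq : sub.filter (fun x => decide (x ≠ 0)) = sub :=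
      List.filter_eq_self.mpr (fun a ha => decide_eq_true (hnz a ha))
    have h2 := h.filter (fun x => decide (x ≠ 0))
    rwa [heq] at h2
  have hnz2 : ∀ x ∈ l.filter (fun x => decide (x ≠ 0)), x ≠ 0 := by
    intro x hx
    exact of_decide_eq_true (List.mem_filter.mp hx).2
  have hne2 : ¬ (l.filter (fun x => decide (x ≠ 0))).isEmpty := by
    obtain ⟨a, ha⟩ := List.exists_mem_of_ne_nil sub hne
    have hmem : a ∈ l.filter (fun x => decide (x ≠ 0)) := hsub'.mem ha
    intro hE
    rw [List.isEmpty_iff] at hE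
    rw [hE] at hmem
    exact absurd hmem List.not_mem_nil
  rw [signChangesList_eq, if_neg hne2]
  exact_mod_cast cntSC_mono hsub' hnz2

lemma cycList_length {n : ℕ} (v : Fin n → ℝ) (i : Fin n) : (cycList v i).length = n + 1 := by
  simp [cycList]

lemma scminus_le {n : ℕ} [NeZero n] (w : Fin n → ℝ) : Scminus w ≤ (n + 1 : ℤ) := by
  have hne : {z : ℤ | ∃ i : Fin n, z = signChangesList (cycList w i)}.Nonempty :=
    ⟨signChangesList (cycList w 0), ⟨0, rfl⟩⟩
  apply csSup_le hne
  rintro z ⟨i, rfl⟩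
  calc signChangesList (cycList w i) ≤ ((cycList w i).length : ℤ) := signChangesList_le _
    _ = (n + 1 : ℤ) := by rw [cycList_length]; push_cast; ring

lemma le_scminus {n : ℕ} [NeZero n] (w : Fin n → ℝ) (i : Fin n) :
    signChangesList (cycList w i) ≤ Scminus w := by
  have hbdd : BddAbove {z : ℤ | ∃ i : Fin n, z = signChangesList (cycList w i)} := by
    refine ⟨(n + 1 : ℤ), ?_⟩
    rintro z ⟨j, rfl⟩
    calc signChangesList (cycList w j) ≤ ((cycList w j).length : ℤ) := signChangesList_le _
      _ = (n + 1 : ℤ) := by rw [cycList_length]; push_cast; ring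
  exact le_csSup hbdd ⟨i, rfl⟩

lemma scminus_filling_le {n : ℕ} [NeZero n] (u w : Fin n → ℝ) (hS2 : Scplus u = 2)
    (hw : FillsZeros u w) : Scminus w ≤ 2 := by
  rw [← hS2]
  have hbdd : BddAbove {z : ℤ | ∃ w' : Fin n → ℝ, FillsZeros u w' ∧ z = Scminus w'} := by
    refine ⟨(n + 1 : ℤ), ?_⟩
    rintro z ⟨w', _, rfl⟩
    exact scminus_le w'
  exact le_csSup hbdd ⟨w, hw, rfl⟩

lemma cycList_get {n : ℕ} [NeZero n] (v : Fin n → ℝ) (b : Fin n) (m : ℕ) (hm : m < n)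
    (h : m < (cycList v b).length) : (cycList v b).get ⟨m, h⟩ = v (b + (m : Fin n)) := by
  have hlen : (List.ofFn fun j : Fin n => v (b + j)).length = n := by simp
  rw [List.get_eq_getElem]
  simp only [cycList]
  rw [List.getElem_append_left (by rw [hlen]; exact hm)]
  rw [List.getElem_ofFn]
  have hmm : (⟨m, hm⟩ : Fin n) = (m : Fin n) := by
    apply Fin.ext
    simp [Fin.val_cast_of_lt hm]
  rw [hmm]

lemma cycList_get_last {n : ℕ} (v : Fin n → ℝ) (b : Fin n)
    (h : n < (cycList v b).length) : (cycList v b).get ⟨n, h⟩ = v b := by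
  have hlen : (List.ofFn fun j : Fin n => v (b + j)).length = n := by simp
  rw [List.get_eq_getElem]
  have h2 : ((List.ofFn fun j : Fin n => v (b + j)) ++ [v b])[n]'(by simp) = v b := by
    rw [List.getElem_append_right (by rw [hlen])]
    simp [hlen]
  exact h2

lemma four_changes {n : ℕ} [NeZero n] (w : Fin n → ℝ) (b : Fin n) (k1 k2 k3 : ℕ)
    (hk1 : 0 < k1) (hk12 : k1 < k2) (hk23 : k2 < k3) (hk3 : k3 < n)
    (p1 : w b * w (b + (k1 : Fin n)) < 0)
    (p2 : w (b + (k1 : Fin n)) * w (b + (k2 : Fin n)) < 0)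
    (p3 : w (b + (k2 : Fin n)) * w (b + (k3 : Fin n)) < 0)
    (p4 : w (b + (k3 : Fin n)) * w b < 0) : (4 : ℤ) ≤ Scminus w := by
  have hL : (cycList w b).length = n + 1 := cycList_length w b
  refine le_trans ?_ (le_scminus w b)
  have e0 : (cycList w b).get ⟨0, by omega⟩ = w b := by
    have h0 := cycList_get w b 0 (Nat.pos_of_ne_zero (NeZero.ne n)) (by omega)
    simpa using h0
  have e1 : (cycList w b).get ⟨k1, by omega⟩ = w (b + (k1 : Fin n)) :=
    cycList_get w b k1 (by omega) (by omega)
  have e2 : (cycList w b).get ⟨k2, by omega⟩ = w (b + (k2 : Fin n)) :=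
    cycList_get w b k2 (by omega) (by omega)
  have e3 : (cycList w b).get ⟨k3, by omega⟩ = w (b + (k3 : Fin n)) :=
    cycList_get w b k3 hk3 (by omega)
  have e4 : (cycList w b).get ⟨n, by omega⟩ = w b := cycList_get_last w b (by omega)
  have hpw : List.Pairwise (fun (x1 x2 : Fin (cycList w b).length) => (x1 : ℕ) < (x2 : ℕ))
      ([⟨0, by omega⟩, ⟨k1, by omega⟩, ⟨k2, by omega⟩, ⟨k3, by omega⟩, ⟨n, by omega⟩] :
        List (Fin (cycList w b).length)) := by
    refine List.Pairwise.cons ?_ (List.Pairwise.cons ?_ (List.Pairwise.cons ?_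
      (List.Pairwise.cons ?_ (List.pairwise_singleton _ _))))
    · intro a ha
      simp only [List.mem_cons, List.mem_singleton, List.not_mem_nil, or_false] at ha
      rcases ha with rfl | rfl | rfl | rfl
      · exact (show (0:ℕ) < k1 by omega)
      · exact (show (0:ℕ) < k2 by omega)
      · exact (show (0:ℕ) < k3 by omega)
      · exact (show (0:ℕ) < n by omega)
    · intro a ha
      simp only [List.mem_cons, List.mem_singleton, List.not_mem_nil, or_false] at ha
      rcases ha with rfl | rfl | rfl
      · exact (show k1 < k2 by omega)
      · exact (show k1 < k3 by omega)
      · exact (show k1 < n by omega)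
    · intro a ha
      simp only [List.mem_cons, List.mem_singleton, List.not_mem_nil, or_false] at ha
      rcases ha with rfl | rfl
      · exact (show k2 < k3 by omega)
      · exact (show k2 < n by omega)
    · intro a ha
      simp only [List.mem_singleton, List.mem_cons, List.not_mem_nil, or_false] at ha
      subst ha
      exact (show k3 < n by omega)
  have hsub0 := List.map_getElem_sublist hpw
  change List.Sublist (List.map (cycList w b).get _) _ at hsub0
  have hmap : List.map (cycList w b).get
      ([⟨0, by omega⟩, ⟨k1, by omega⟩, ⟨k2, by omega⟩, ⟨k3, by omega⟩, ⟨n, by omega⟩] :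
        List (Fin (cycList w b).length)) = [w b, w (b + (k1 : Fin n)), w (b + (k2 : Fin n)),
      w (b + (k3 : Fin n)), w b] := by
    simp only [List.map_cons, List.map_nil, e0, e1, e2, e3, e4]
  rw [hmap] at hsub0
  have hnz : ∀ x ∈ [w b, w (b + (k1 : Fin n)), w (b + (k2 : Fin n)), w (b + (k3 : Fin n)), w b],
      x ≠ 0 := by
    have n0 : w b ≠ 0 := fun h => by simp [h] at p1
    have n1 : w (b + (k1 : Fin n)) ≠ 0 := fun h => by simp [h] at p1
    have n2 : w (b + (k2 : Fin n)) ≠ 0 := fun h => by simp [h] at p2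
    have n3 : w (b + (k3 : Fin n)) ≠ 0 := fun h => by simp [h] at p3
    intro x hx
    simp only [List.mem_cons, List.not_mem_nil, or_false] at hx
    rcases hx with rfl | rfl | rfl | rfl | rfl <;> assumption
  have hcnt : cntSC [w b, w (b + (k1 : Fin n)), w (b + (k2 : Fin n)),
      w (b + (k3 : Fin n)), w b] = 4 := by
    rw [cntSC_cons_cons, cntSC_cons_cons, cntSC_cons_cons, cntSC_cons_cons, cntSC_single,
      if_pos p1, if_pos p2, if_pos p3, if_pos p4]
  calc (4 : ℤ) = (cntSC [w b, w (b + (k1 : Fin n)), w (b + (k2 : Fin n)),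
      w (b + (k3 : Fin n)), w b] : ℤ) := by rw [hcnt]; norm_num
    _ ≤ signChangesList (cycList w b) := le_signChangesList hsub0 (by simp) hnz

section analysis
variable {P : ℕ} [NeZero P] {g0 : ℤ → ℝ}

lemma g0_nonneg (hsupp : Function.support g0 = {t : ℤ | 0 ≤ t})
    (hpos : ∀ t : ℤ, 0 ≤ t → 0 < g0 t) : ∀ t : ℤ, 0 ≤ g0 t := by
  intro t
  rcases le_or_gt 0 t with h | h
  · exact (hpos t h).le
  · have : t ∉ Function.support g0 := by rw [hsupp]; simp; omega
    simp [Function.notMem_support.mp this]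

lemma summable_aux (hg : Summable g0) (c : ℤ) (hP : (P : ℤ) ≠ 0) :
    Summable (fun k : ℤ => g0 (c + k * (P : ℤ))) := by
  have hinj : Function.Injective (fun k : ℤ => c + k * (P : ℤ)) := by
    intro a b hab
    simp only at hab
    have : a * (P:ℤ) = b * (P:ℤ) := by omega
    exact mul_right_cancel₀ hP this
  exact hg.comp_injective hinj

lemma pbar_pos (hg : Summable g0) (hsupp : Function.support g0 = {t : ℤ | 0 ≤ t})
    (hpos : ∀ t : ℤ, 0 ≤ t → 0 < g0 t) (i : Fin P) : 0 < pbar g0 P i := by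
  have hP : (P : ℤ) ≠ 0 := by exact_mod_cast NeZero.ne P
  refine Summable.tsum_pos (summable_aux hg _ hP) (fun k => g0_nonneg hsupp hpos _) 0 ?_
  simp only [zero_mul, add_zero]
  exact hpos _ (by positivity)

/-- strict decrease: for naturals m with m+1 < P, pbar at m+1 is less than at m. -/
lemma pbar_strict (hg : Summable g0) (hsupp : Function.support g0 = {t : ℤ | 0 ≤ t})
    (hpos : ∀ t : ℤ, 0 ≤ t → 0 < g0 t) (hdec : ∀ t : ℤ, 0 ≤ t → g0 (t + 1) < g0 t)
    (m : ℕ) (hm : m + 1 < P) :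
    pbar g0 P ⟨m + 1, hm⟩ < pbar g0 P ⟨m, by omega⟩ := by
  have hP : (P : ℤ) ≠ 0 := by exact_mod_cast NeZero.ne P
  have h1 : Summable (fun k : ℤ => g0 ((m : ℤ) + k * (P : ℤ))) := summable_aux hg _ hP
  have h2 : Summable (fun k : ℤ => g0 (((m : ℤ) + 1) + k * (P : ℤ))) := summable_aux hg _ hP
  have key : 0 < ∑' k : ℤ, (g0 ((m : ℤ) + k * (P : ℤ)) - g0 (((m : ℤ) + 1) + k * (P : ℤ))) := by
    refine Summable.tsum_pos (h1.sub h2) ?_ 0 ?_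
    · intro k
      rcases le_or_gt 0 ((m : ℤ) + k * (P : ℤ)) with h | h
      · have := hdec _ h
        have heq : (m : ℤ) + k * (P : ℤ) + 1 = ((m : ℤ) + 1) + k * (P : ℤ) := by ring
        rw [heq] at this
        linarith
      · -- both arguments negative: m + kP < 0 and m+1+kP ≤ 0; show m+1+kP < 0
        have hne : (m : ℤ) + k * (P : ℤ) ≠ -1 := by
          intro habs
          have hm0 : (0 : ℤ) ≤ (m : ℤ) := Int.natCast_nonneg m
          have hP0 : (0 : ℤ) < (P : ℤ) := Int.natCast_pos.mpr (Nat.pos_of_ne_zero (NeZero.ne P))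
          have hk : k < 0 := by
            by_contra hk0
            push_neg at hk0
            have : (0 : ℤ) ≤ k * (P : ℤ) := mul_nonneg hk0 hP0.le
            omega
          have hk1 : k ≤ -1 := by omega
          have : k * (P : ℤ) ≤ (-1) * (P : ℤ) := by
            apply mul_le_mul_of_nonneg_right hk1 hP0.le
          have hmP : (m : ℤ) ≤ (P : ℤ) - 2 := by
            have : (m : ℤ) + 1 < (P : ℤ) := by exact_mod_cast hm
            omega
          omega
        have hlt : ((m : ℤ) + 1) + k * (P : ℤ) < 0 := by omega
        have hz1 : g0 ((m : ℤ) + k * (P : ℤ)) = 0 := by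
          have : ((m : ℤ) + k * (P : ℤ)) ∉ Function.support g0 := by rw [hsupp]; simp; omega
          exact Function.notMem_support.mp this
        have hz2 : g0 (((m : ℤ) + 1) + k * (P : ℤ)) = 0 := by
          have : (((m : ℤ) + 1) + k * (P : ℤ)) ∉ Function.support g0 := by
            rw [hsupp]; simp; omega
          exact Function.notMem_support.mp this
        rw [hz1, hz2]
        norm_num
    · simp only [zero_mul, add_zero]
      have := hdec (m : ℤ) (by positivity)
      linarith
  have hsub : ∑' k : ℤ, (g0 ((m : ℤ) + k * (P : ℤ)) - g0 (((m : ℤ) + 1) + k * (P : ℤ)))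
      = pbar g0 P ⟨m, by omega⟩ - pbar g0 P ⟨m + 1, hm⟩ := by
    rw [Summable.tsum_sub h1 h2]
    simp [pbar]
  rw [hsub] at key
  linarith

lemma Qmat_mulVec (v : Fin P → ℝ) (i : Fin P) : (Qmat P).mulVec v i = v (i - 1) := by
  unfold Qmat Matrix.mulVec dotProduct
  simp only [Matrix.of_apply]
  have hval : ∀ j : Fin P, ((j + 1 : Fin P) : ℕ) = ((j : ℕ) + 1) % P := by
    intro j
    rw [Fin.add_def, Fin.val_one']
    exact Nat.add_mod_mod _ _ _
  have hcond : ∀ j : Fin P, ((i : ℕ) = ((j : ℕ) + 1) % P) ↔ j = i - 1 := by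
    intro j
    rw [← hval j, ← Fin.ext_iff]
    constructor
    · intro h
      rw [h]
      ring
    · intro h
      rw [h]
      ring
  rw [Finset.sum_congr rfl (fun j _ => by rw [if_congr (hcond j) rfl rfl])]
  simp [Finset.sum_ite_eq' Finset.univ (i - 1) v]

lemma Qmat_pow_mulVec (m : ℕ) (v : Fin P → ℝ) (i : Fin P) :
    ((Qmat P) ^ m).mulVec v i = v (i - (m : Fin P)) := by
  induction m generalizing v i with
  | zero => simp
  | succ k ih =>
    rw [pow_succ, ← Matrix.mulVec_mulVec]
    rw [ih]
    rw [Qmat_mulVec]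
    congr 1
    push_cast
    ring

lemma circ_mulVec (gb : Fin P → ℝ) (s : Fin P → ℝ) (t : Fin P) :
    (Matrix.circulant gb).mulVec s t = ∑ j : Fin P, gb (t - j) * s j := by
  unfold Matrix.mulVec dotProduct
  simp [Matrix.circulant_apply]

end analysis


section signhelp

lemma real_sign_cases (x : ℝ) : Real.sign x = -1 ∨ Real.sign x = 0 ∨ Real.sign x = 1 := by
  rcases lt_trichotomy x 0 with h | h | h
  · left; exact Real.sign_of_neg h
  · right; left; rw [h]; exact Real.sign_zero
  · right; right; exact Real.sign_of_pos h

lemma neg_one_le_sign (x : ℝ) : -1 ≤ Real.sign x := by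
  rcases real_sign_cases x with h | h | h <;> rw [h] <;> norm_num

lemma sign_le_one (x : ℝ) : Real.sign x ≤ 1 := by
  rcases real_sign_cases x with h | h | h <;> rw [h] <;> norm_num

lemma sign_nonpos_of_nonpos {x : ℝ} (h : x ≤ 0) : Real.sign x ≤ 0 := by
  rcases eq_or_lt_of_le h with h1 | h1
  · rw [h1]; simp
  · rw [Real.sign_of_neg h1]; norm_num

lemma sign_nonneg_of_nonneg {x : ℝ} (h : 0 ≤ x) : 0 ≤ Real.sign x := by
  rcases eq_or_lt_of_le h with h1 | h1
  · rw [← h1]; simp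
  · rw [Real.sign_of_pos h1]; norm_num

end signhelp

section steps
variable {P : ℕ} [NeZero P]

lemma fin_last_succ (ℓ : Fin P) (h : (ℓ : ℕ) = P - 1) : ℓ + 1 = 0 := by
  have hP1 : 0 < P := Nat.pos_of_ne_zero (NeZero.ne P)
  apply Fin.ext
  have hv : ((ℓ + 1 : Fin P) : ℕ) = ((ℓ : ℕ) + 1 % P) % P := by rw [Fin.add_def, Fin.val_one']
  have hz : ((0 : Fin P) : ℕ) = 0 := rfl
  rw [hv, h, hz]
  rcases eq_or_lt_of_le (Nat.succ_le_of_lt hP1) with h1 | h1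
  · simp [← h1]
  · rw [Nat.mod_eq_of_lt h1, Nat.sub_add_cancel hP1, Nat.mod_self]

lemma fin_succ_ne_zero_val (ℓ : Fin P) (h : ℓ + 1 ≠ 0) : (ℓ : ℕ) + 1 < P := by
  have := ℓ.isLt
  rcases eq_or_lt_of_le (Nat.succ_le_of_lt this) with he | hlt
  · exact absurd (fin_last_succ ℓ (by omega)) h
  · exact hlt

lemma step_identity (gb u : Fin P → ℝ) (t : Fin P) :
    (-(∑ j : Fin P, gb (t + 1 - j) * Real.sign (u j))) - (-(∑ j : Fin P, gb (t - j) * Real.sign (u j)))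
      = ∑ ℓ : Fin P, (gb ℓ - gb (ℓ + 1)) * (Real.sign (u (t - ℓ)) - Real.sign (u (t + 1))) := by
  have hA : (-(∑ j : Fin P, gb (t + 1 - j) * Real.sign (u j))) - (-(∑ j : Fin P, gb (t - j) * Real.sign (u j)))
      = ∑ j : Fin P, (gb (t - j) - gb ((t - j) + 1)) * Real.sign (u j) := by
    have h1 : ∀ j : Fin P, (gb (t - j) - gb ((t - j) + 1)) * Real.sign (u j)
        = gb (t - j) * Real.sign (u j) - gb (t + 1 - j) * Real.sign (u j) := by
      intro j
      rw [show (t - j) + 1 = t + 1 - j by ring]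
      ring
    rw [Finset.sum_congr rfl (fun j _ => h1 j), Finset.sum_sub_distrib]
    ring
  rw [hA]
  have hB : ∑ j : Fin P, (gb (t - j) - gb ((t - j) + 1)) * Real.sign (u j)
      = ∑ ℓ : Fin P, (gb ℓ - gb (ℓ + 1)) * Real.sign (u (t - ℓ)) := by
    apply Fintype.sum_equiv (Equiv.subLeft t)
    intro ℓ
    simp [Equiv.subLeft_apply, sub_sub_cancel]
  rw [hB]
  have hC : ∑ ℓ : Fin P, (gb ℓ - gb (ℓ + 1)) = 0 := by
    rw [Finset.sum_sub_distrib, sub_eq_zero]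
    exact Fintype.sum_equiv (Equiv.subRight (1 : Fin P)) gb (fun ℓ => gb (ℓ + 1))
      (fun x => congrArg gb (by rw [Equiv.subRight_apply]; ring))
  have hD : ∑ ℓ : Fin P, (gb ℓ - gb (ℓ + 1)) * (Real.sign (u (t - ℓ)) - Real.sign (u (t + 1)))
      = (∑ ℓ : Fin P, (gb ℓ - gb (ℓ + 1)) * Real.sign (u (t - ℓ)))
        - (∑ ℓ : Fin P, (gb ℓ - gb (ℓ + 1))) * Real.sign (u (t + 1)) := by
    have h2 : ∀ ℓ : Fin P, (gb ℓ - gb (ℓ + 1)) * (Real.sign (u (t - ℓ)) - Real.sign (u (t + 1)))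
        = (gb ℓ - gb (ℓ + 1)) * Real.sign (u (t - ℓ)) - (gb ℓ - gb (ℓ + 1)) * Real.sign (u (t + 1)) := fun ℓ => by ring
    rw [Finset.sum_congr rfl (fun ℓ _ => h2 ℓ), Finset.sum_sub_distrib, ← Finset.sum_mul]
  rw [hD, hC]
  ring

lemma step_up (gb : Fin P → ℝ)
    (hdec : ∀ ℓ : Fin P, (ℓ : ℕ) + 1 < P → 0 < gb ℓ - gb (ℓ + 1))
    (u : Fin P → ℝ) (t : Fin P) (hneg : u (t + 1) < 0) (hpos : ∃ j, 0 < u j) :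
    0 < ∑ ℓ : Fin P, (gb ℓ - gb (ℓ + 1)) * (Real.sign (u (t - ℓ)) - Real.sign (u (t + 1))) := by
  obtain ⟨j0, hj0⟩ := hpos
  have hsneg : Real.sign (u (t + 1)) = -1 := Real.sign_of_neg hneg
  apply Finset.sum_pos'
  · intro ℓ _
    by_cases hℓ : (ℓ : ℕ) + 1 < P
    · apply mul_nonneg (hdec ℓ hℓ).le
      rw [hsneg]
      have := neg_one_le_sign (u (t - ℓ))
      linarith
    · have hℓ1 : ℓ + 1 = 0 := by
        have := ℓ.isLt
        exact fin_last_succ ℓ (by omega)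
      have ht : t - ℓ = t + 1 := by
        have hm : ℓ = -(1 : Fin P) := by linear_combination hℓ1
        rw [hm]; ring
      rw [ht, sub_self, mul_zero]
  · refine ⟨t - j0, Finset.mem_univ _, ?_⟩
    have hts : t - (t - j0) = j0 := by ring
    rw [hts]
    have hsj : Real.sign (u j0) = 1 := Real.sign_of_pos hj0
    have hne : t - j0 + 1 ≠ 0 := by
      intro habs
      have hj : j0 = t + 1 := by linear_combination -habs
      rw [hj] at hj0; linarith
    have hc := hdec _ (fin_succ_ne_zero_val _ hne)
    rw [hsj, hsneg]
    nlinarith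

lemma step_down (gb : Fin P → ℝ)
    (hdec : ∀ ℓ : Fin P, (ℓ : ℕ) + 1 < P → 0 < gb ℓ - gb (ℓ + 1))
    (u : Fin P → ℝ) (t : Fin P) (hpos : 0 < u (t + 1)) (hneg : ∃ j, u j < 0) :
    ∑ ℓ : Fin P, (gb ℓ - gb (ℓ + 1)) * (Real.sign (u (t - ℓ)) - Real.sign (u (t + 1))) < 0 := by
  obtain ⟨j1, hj1⟩ := hneg
  have h := step_up gb hdec (fun j => -u j) t (by simpa using hpos) ⟨j1, by simpa using hj1⟩
  have heq : ∀ ℓ : Fin P, (gb ℓ - gb (ℓ + 1)) *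
      (Real.sign ((fun j => -u j) (t - ℓ)) - Real.sign ((fun j => -u j) (t + 1)))
      = -((gb ℓ - gb (ℓ + 1)) * (Real.sign (u (t - ℓ)) - Real.sign (u (t + 1)))) := by
    intro ℓ
    simp only [Real.sign_neg]
    ring
  rw [Finset.sum_congr rfl (fun ℓ _ => heq ℓ), Finset.sum_neg_distrib] at h
  linarith

lemma allsign_pos (gb : Fin P → ℝ) (hgb : ∀ i, 0 < gb i)
    (u : Fin P → ℝ) (hs : ∀ j, u j ≤ 0) (j0 : Fin P) (hj0 : u j0 < 0) (x : Fin P) :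
    0 < -(∑ j : Fin P, gb (x - j) * Real.sign (u j)) := by
  rw [← Finset.sum_neg_distrib]
  apply Finset.sum_pos'
  · intro j _
    have h1 := sign_nonpos_of_nonpos (hs j)
    have h2 := hgb (x - j)
    nlinarith
  · refine ⟨j0, Finset.mem_univ _, ?_⟩
    rw [Real.sign_of_neg hj0]
    have := hgb (x - j0)
    nlinarith

lemma allsign_neg (gb : Fin P → ℝ) (hgb : ∀ i, 0 < gb i)
    (u : Fin P → ℝ) (hs : ∀ j, 0 ≤ u j) (j0 : Fin P) (hj0 : 0 < u j0) (x : Fin P) :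
    -(∑ j : Fin P, gb (x - j) * Real.sign (u j)) < 0 := by
  have hpos : 0 < ∑ j : Fin P, gb (x - j) * Real.sign (u j) := by
    apply Finset.sum_pos'
    · intro j _
      have h1 := sign_nonneg_of_nonneg (hs j)
      have h2 := hgb (x - j)
      nlinarith
    · refine ⟨j0, Finset.mem_univ _, ?_⟩
      rw [Real.sign_of_pos hj0]
      have := hgb (x - j0)
      nlinarith
  linarith

end steps

lemma scminus_zero {n : ℕ} [NeZero n] : Scminus (fun _ : Fin n => (0 : ℝ)) = -1 := by
  have hzero : ∀ i : Fin n, signChangesList (cycList (fun _ : Fin n => (0 : ℝ)) i) = -1 := by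
    intro i
    have hfil : (cycList (fun _ : Fin n => (0 : ℝ)) i).filter (fun x => decide (x ≠ 0)) = [] := by
      apply List.filter_eq_nil_iff.mpr
      intro a ha
      simp only [cycList, List.mem_append, List.mem_ofFn, List.mem_singleton] at ha
      have ha0 : a = 0 := by
        rcases ha with h | h
        · obtain ⟨j, hj⟩ := h
          exact hj.symm
        · exact h
      simp [ha0]
    rw [signChangesList_eq, hfil]
    simp
  have hset : {z : ℤ | ∃ i : Fin n, z = signChangesList (cycList (fun _ : Fin n => (0 : ℝ)) i)}
      = {-1} := by
    ext z
    simp only [Set.mem_setOf_eq, Set.mem_singleton_iff]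
    constructor
    · rintro ⟨i, rfl⟩
      exact hzero i
    · intro hz
      exact ⟨0, by rw [hzero 0, hz]⟩
  rw [Scminus, hset, csSup_singleton]

lemma SK_pos {P : ℕ} [NeZero P] (uP : Fin P → ℝ) (hS2 : Scplus uP = 2)
    (Pd : ℕ) (i0 : Fin P) (hi0 : 0 < uP i0) (k : ℕ) (hk2 : 2 ≤ k) (hkPd : k < Pd) (hPdP : Pd < P)
    (S0 : uP (i0 - (Pd : Fin P)) ≤ 0) (S1 : 0 ≤ uP (i0 - (Pd : Fin P) + 1))
    (h : uP (i0 - (Pd : Fin P) + (k : Fin P)) ≤ 0) : False := by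
  classical
  set b : Fin P := i0 - (Pd : Fin P) with hb
  have hcast : ∀ x : ℕ, x < P → ((x : Fin P) : ℕ) = x := fun x hx => Fin.val_cast_of_lt hx
  have hadd : ∀ x y : ℕ, x < P → y < P → (b + (x : Fin P) = b + (y : Fin P)) → x = y := by
    intro x y hx hy hxy
    have h2 : (x : Fin P) = (y : Fin P) := add_left_cancel hxy
    have h3 := congrArg Fin.val h2
    rwa [hcast x hx, hcast y hy] at h3
  have hb1 : b ≠ b + 1 := by
    intro habs
    have h0 : (0 : ℕ) = 1 := hadd 0 1 (by omega) (by omega)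
      (by rw [Nat.cast_zero, Nat.cast_one, add_zero]; exact habs)
    omega
  have hbk : b ≠ b + (k : Fin P) := by
    intro habs
    have h0 : (0 : ℕ) = k := hadd 0 k (by omega) (by omega)
      (by rw [Nat.cast_zero, add_zero]; exact habs)
    omega
  have h1k : b + 1 ≠ b + (k : Fin P) := by
    intro habs
    have h0 : (1 : ℕ) = k := hadd 1 k (by omega) (by omega)
      (by rw [Nat.cast_one]; exact habs)
    omega
  have hbPd : b + (Pd : Fin P) = i0 := by rw [hb]; ring
  set w : Fin P → ℝ := fun j => if uP j ≠ 0 then uP j else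
      (if j = b + 1 then 1 else if j = b + (k : Fin P) then -1 else if j = b then -1 else 0)
    with hw
  have hfill : FillsZeros uP w := by
    intro i hi
    simp only [hw, if_pos hi]
  have hwb : w b < 0 := by
    by_cases hz : uP b = 0
    · have hwbe : w b = -1 := by
        simp only [hw]
        rw [if_neg (by simpa using hz), if_neg hb1, if_neg hbk]
        simp
      rw [hwbe]; norm_num
    · have hwbe : w b = uP b := by simp only [hw]; rw [if_pos hz]
      rw [hwbe]
      exact lt_of_le_of_ne S0 hz
  have hwb1 : 0 < w (b + 1) := by
    by_cases hz : uP (b + 1) = 0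
    · have hwbe : w (b + 1) = 1 := by
        simp only [hw]
        rw [if_neg (by simpa using hz)]
        simp
      rw [hwbe]; norm_num
    · have hwbe : w (b + 1) = uP (b + 1) := by simp only [hw]; rw [if_pos hz]
      rw [hwbe]
      exact lt_of_le_of_ne S1 (Ne.symm hz)
  have hwbk : w (b + (k : Fin P)) < 0 := by
    by_cases hz : uP (b + (k : Fin P)) = 0
    · have hwbe : w (b + (k : Fin P)) = -1 := by
        simp only [hw]
        rw [if_neg (by simpa using hz), if_neg (Ne.symm h1k)]
        simp
      rw [hwbe]; norm_num
    · have hwbe : w (b + (k : Fin P)) = uP (b + (k : Fin P)) := by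
        simp only [hw]; rw [if_pos hz]
      rw [hwbe]
      exact lt_of_le_of_ne h hz
  have hwi0 : 0 < w (b + (Pd : Fin P)) := by
    rw [hbPd]
    have hne : uP i0 ≠ 0 := ne_of_gt hi0
    have hwbe : w i0 = uP i0 := by simp only [hw]; rw [if_pos hne]
    rw [hwbe]; exact hi0
  have p1 : w b * w (b + ((1 : ℕ) : Fin P)) < 0 := by
    rw [Nat.cast_one]; exact mul_neg_of_neg_of_pos hwb hwb1
  have p2 : w (b + ((1 : ℕ) : Fin P)) * w (b + (k : Fin P)) < 0 := by
    rw [Nat.cast_one]; exact mul_neg_of_pos_of_neg hwb1 hwbk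
  have p3 : w (b + (k : Fin P)) * w (b + (Pd : Fin P)) < 0 :=
    mul_neg_of_neg_of_pos hwbk hwi0
  have p4 : w (b + (Pd : Fin P)) * w b < 0 := mul_neg_of_pos_of_neg hwi0 hwb
  have h4 := four_changes w b 1 k Pd one_pos (by omega) hkPd hPdP p1 p2 p3 p4
  have hle := scminus_filling_le uP w hS2 hfill
  linarith

lemma SK_neg {P : ℕ} [NeZero P] (uP : Fin P → ℝ) (hS2 : Scplus uP = 2)
    (Pd : ℕ) (i1 : Fin P) (hi1 : uP i1 < 0) (k : ℕ) (hk2 : 2 ≤ k) (hkPd : k < Pd) (hPdP : Pd < P)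
    (S0 : 0 ≤ uP (i1 - (Pd : Fin P))) (S1 : uP (i1 - (Pd : Fin P) + 1) ≤ 0)
    (h : 0 ≤ uP (i1 - (Pd : Fin P) + (k : Fin P))) : False := by
  classical
  set b : Fin P := i1 - (Pd : Fin P) with hb
  have hcast : ∀ x : ℕ, x < P → ((x : Fin P) : ℕ) = x := fun x hx => Fin.val_cast_of_lt hx
  have hadd : ∀ x y : ℕ, x < P → y < P → (b + (x : Fin P) = b + (y : Fin P)) → x = y := by
    intro x y hx hy hxy
    have h2 : (x : Fin P) = (y : Fin P) := add_left_cancel hxy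
    have h3 := congrArg Fin.val h2
    rwa [hcast x hx, hcast y hy] at h3
  have hb1 : b ≠ b + 1 := by
    intro habs
    have h0 : (0 : ℕ) = 1 := hadd 0 1 (by omega) (by omega)
      (by rw [Nat.cast_zero, Nat.cast_one, add_zero]; exact habs)
    omega
  have hbk : b ≠ b + (k : Fin P) := by
    intro habs
    have h0 : (0 : ℕ) = k := hadd 0 k (by omega) (by omega)
      (by rw [Nat.cast_zero, add_zero]; exact habs)
    omega
  have h1k : b + 1 ≠ b + (k : Fin P) := by
    intro habs
    have h0 : (1 : ℕ) = k := hadd 1 k (by omega) (by omega)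
      (by rw [Nat.cast_one]; exact habs)
    omega
  have hbPd : b + (Pd : Fin P) = i1 := by rw [hb]; ring
  set w : Fin P → ℝ := fun j => if uP j ≠ 0 then uP j else
      (if j = b + 1 then -1 else if j = b + (k : Fin P) then 1 else if j = b then 1 else 0)
    with hw
  have hfill : FillsZeros uP w := by
    intro i hi
    simp only [hw, if_pos hi]
  have hwb : 0 < w b := by
    by_cases hz : uP b = 0
    · have hwbe : w b = 1 := by
        simp only [hw]
        rw [if_neg (by simpa using hz), if_neg hb1, if_neg hbk]
        simp
      rw [hwbe]; norm_num
    · have hwbe : w b = uP b := by simp only [hw]; rw [if_pos hz]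
      rw [hwbe]
      exact lt_of_le_of_ne S0 (Ne.symm hz)
  have hwb1 : w (b + 1) < 0 := by
    by_cases hz : uP (b + 1) = 0
    · have hwbe : w (b + 1) = -1 := by
        simp only [hw]
        rw [if_neg (by simpa using hz)]
        simp
      rw [hwbe]; norm_num
    · have hwbe : w (b + 1) = uP (b + 1) := by simp only [hw]; rw [if_pos hz]
      rw [hwbe]
      exact lt_of_le_of_ne S1 hz
  have hwbk : 0 < w (b + (k : Fin P)) := by
    by_cases hz : uP (b + (k : Fin P)) = 0
    · have hwbe : w (b + (k : Fin P)) = 1 := by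
        simp only [hw]
        rw [if_neg (by simpa using hz), if_neg (Ne.symm h1k)]
        simp
      rw [hwbe]; norm_num
    · have hwbe : w (b + (k : Fin P)) = uP (b + (k : Fin P)) := by
        simp only [hw]; rw [if_pos hz]
      rw [hwbe]
      exact lt_of_le_of_ne h (Ne.symm hz)
  have hwi1 : w (b + (Pd : Fin P)) < 0 := by
    rw [hbPd]
    have hne : uP i1 ≠ 0 := ne_of_lt hi1
    have hwbe : w i1 = uP i1 := by simp only [hw]; rw [if_pos hne]
    rw [hwbe]; exact hi1
  have p1 : w b * w (b + ((1 : ℕ) : Fin P)) < 0 := by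
    rw [Nat.cast_one]; exact mul_neg_of_pos_of_neg hwb hwb1
  have p2 : w (b + ((1 : ℕ) : Fin P)) * w (b + (k : Fin P)) < 0 := by
    rw [Nat.cast_one]; exact mul_neg_of_neg_of_pos hwb1 hwbk
  have p3 : w (b + (k : Fin P)) * w (b + (Pd : Fin P)) < 0 :=
    mul_neg_of_pos_of_neg hwbk hwi1
  have p4 : w (b + (Pd : Fin P)) * w b < 0 := mul_neg_of_neg_of_pos hwi1 hwb
  have h4 := four_changes w b 1 k Pd one_pos (by omega) hkPd hPdP p1 p2 p3 p4
  have hle := scminus_filling_le uP w hS2 hfill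
  linarith

/-- For the delayed relay feedback system `u^P = -Q_P^{P_d} H_{ḡ₀^P} sign(u^P)` with
`P_d ≥ 1` and `g₀ ∈ ℓ¹` strictly positive and strictly decreasing on its support
`{0,1,2,…}`, any self-oscillation `u ∈ ℓ∞(P)` with `S_c⁻(Δ_c u^P) = 2`,
`S_c⁺(u^P) = 2` and `P ≥ P_d` satisfies `P ≥ 2 P_d`. -/
theorem stmt13 (P Pd : ℕ) (hPd : 1 ≤ Pd) (hPPd : Pd ≤ P)
    (g0 : ℤ → ℝ) (hg : Summable g0)
    (hsupp : Function.support g0 = {t : ℤ | 0 ≤ t})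
    (hpos : ∀ t : ℤ, 0 ≤ t → 0 < g0 t)
    (hdec : ∀ t : ℤ, 0 ≤ t → g0 (t + 1) < g0 t)
    (u : ℤ → ℝ) (hb : ∃ C : ℝ, ∀ t, |u t| ≤ C) (hper : ∀ t : ℤ, u (t + P) = u t)
    (uP : Fin P → ℝ) (huP : uP = fun i : Fin P => u ((i : ℕ) : ℤ))
    (hS1 : Scminus (cdiff uP) = 2) (hS2 : Scplus uP = 2)
    (hfix : uP = -((Qmat P ^ Pd).mulVec
      ((Matrix.circulant (pbar g0 P)).mulVec fun i => Real.sign (uP i)))) :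
    2 * Pd ≤ P := by

  have hP0 : 0 < P := lt_of_lt_of_le hPd hPPd
  haveI : NeZero P := ⟨hP0.ne'⟩
  -- g-bar properties
  have hgb_pos : ∀ i, 0 < pbar g0 P i := pbar_pos hg hsupp hpos
  have hgb_dec : ∀ ℓ : Fin P, (ℓ : ℕ) + 1 < P → 0 < pbar g0 P ℓ - pbar g0 P (ℓ + 1) := by
    intro ℓ hℓ
    have hstrict := pbar_strict hg hsupp hpos hdec (ℓ : ℕ) hℓ
    have e0 : (⟨(ℓ : ℕ), by omega⟩ : Fin P) = ℓ := by apply Fin.ext; rfl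
    have e1 : (⟨(ℓ : ℕ) + 1, hℓ⟩ : Fin P) = ℓ + 1 := by
      apply Fin.ext
      rw [Fin.add_def, Fin.val_one']
      exact ((Nat.add_mod_mod _ _ _).trans (Nat.mod_eq_of_lt hℓ)).symm
    rw [e0, e1] at hstrict
    linarith
  -- scalar fixed-point equation
  have hscal : ∀ i : Fin P,
      uP i = -(∑ j : Fin P, pbar g0 P (i - (Pd : Fin P) - j) * Real.sign (uP j)) := by
    intro i
    have h0 := congrFun hfix i
    rw [Pi.neg_apply] at h0
    simp only [Qmat_pow_mulVec, circ_mulVec] at h0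
    exact h0
  have hf : ∀ t : Fin P,
      uP (t + (Pd : Fin P)) = -(∑ j : Fin P, pbar g0 P (t - j) * Real.sign (uP j)) := by
    intro t
    have h := hscal (t + (Pd : Fin P))
    simp only [add_sub_cancel_right] at h
    exact h
  -- uP is not identically zero
  have hnz : ∃ j, uP j ≠ 0 := by
    by_contra hall
    push_neg at hall
    have hcd : cdiff uP = (fun _ : Fin P => (0 : ℝ)) := by
      funext i
      simp [cdiff, hall]
    rw [hcd, scminus_zero] at hS1
    norm_num at hS1
  have hApos : ∃ j, 0 < uP j := by
    by_contra hA
    push_neg at hA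
    obtain ⟨j0, hj0⟩ := hnz
    have hj0n : uP j0 < 0 := lt_of_le_of_ne (hA j0) hj0
    have hkey := allsign_pos (pbar g0 P) hgb_pos uP hA j0 hj0n (j0 - (Pd : Fin P))
    rw [← hscal j0] at hkey
    linarith
  have hBneg : ∃ j, uP j < 0 := by
    by_contra hB
    push_neg at hB
    obtain ⟨j0, hj0⟩ := hnz
    have hj0p : 0 < uP j0 := lt_of_le_of_ne (hB j0) (Ne.symm hj0)
    have hkey := allsign_neg (pbar g0 P) hgb_pos uP hB j0 hj0p (j0 - (Pd : Fin P))
    rw [← hscal j0] at hkey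
    linarith
  -- monotonicity transfer
  have hup : ∀ t : Fin P, uP (t + 1) < 0 →
      uP (t + (Pd : Fin P)) < uP (t + 1 + (Pd : Fin P)) := by
    intro t h
    have hid := step_identity (pbar g0 P) uP t
    have hp := step_up (pbar g0 P) hgb_dec uP t h hApos
    rw [hf t, hf (t + 1)]
    linarith
  have hdown : ∀ t : Fin P, 0 < uP (t + 1) →
      uP (t + 1 + (Pd : Fin P)) < uP (t + (Pd : Fin P)) := by
    intro t h
    have hid := step_identity (pbar g0 P) uP t
    have hp := step_down (pbar g0 P) hgb_dec uP t h hBneg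
    rw [hf t, hf (t + 1)]
    linarith
  -- extrema
  obtain ⟨i0, -, hmax0⟩ :=
    Finset.exists_max_image (Finset.univ : Finset (Fin P)) uP ⟨0, Finset.mem_univ 0⟩
  have hmax : ∀ i, uP i ≤ uP i0 := fun i => hmax0 i (Finset.mem_univ i)
  obtain ⟨i1, -, hmin0⟩ :=
    Finset.exists_min_image (Finset.univ : Finset (Fin P)) uP ⟨0, Finset.mem_univ 0⟩
  have hmin : ∀ i, uP i1 ≤ uP i := fun i => hmin0 i (Finset.mem_univ i)
  obtain ⟨ja, hja⟩ := hApos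
  obtain ⟨jb, hjb⟩ := hBneg
  have hi0pos : 0 < uP i0 := lt_of_lt_of_le hja (hmax ja)
  have hi1neg : uP i1 < 0 := lt_of_le_of_lt (hmin jb) hjb
  -- boundary inequalities near the extrema
  have S0 : uP (i0 - (Pd : Fin P)) ≤ 0 := by
    by_contra hc
    push_neg at hc
    have h2 := hdown (i0 - (Pd : Fin P) - 1)
      (by rw [show i0 - (Pd : Fin P) - 1 + 1 = i0 - (Pd : Fin P) by ring]; exact hc)
    rw [show i0 - (Pd : Fin P) - 1 + 1 + (Pd : Fin P) = i0 by ring,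
        show i0 - (Pd : Fin P) - 1 + (Pd : Fin P) = i0 - 1 by ring] at h2
    exact absurd (hmax (i0 - 1)) (not_le.mpr h2)
  have S1 : 0 ≤ uP (i0 - (Pd : Fin P) + 1) := by
    by_contra hc
    push_neg at hc
    have h2 := hup (i0 - (Pd : Fin P)) hc
    rw [show i0 - (Pd : Fin P) + (Pd : Fin P) = i0 by ring,
        show i0 - (Pd : Fin P) + 1 + (Pd : Fin P) = i0 + 1 by ring] at h2
    exact absurd (hmax (i0 + 1)) (not_le.mpr h2)
  have S0' : 0 ≤ uP (i1 - (Pd : Fin P)) := by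
    by_contra hc
    push_neg at hc
    have h2 := hup (i1 - (Pd : Fin P) - 1)
      (by rw [show i1 - (Pd : Fin P) - 1 + 1 = i1 - (Pd : Fin P) by ring]; exact hc)
    rw [show i1 - (Pd : Fin P) - 1 + 1 + (Pd : Fin P) = i1 by ring,
        show i1 - (Pd : Fin P) - 1 + (Pd : Fin P) = i1 - 1 by ring] at h2
    exact absurd (hmin (i1 - 1)) (not_le.mpr h2)
  have S1' : uP (i1 - (Pd : Fin P) + 1) ≤ 0 := by
    by_contra hc
    push_neg at hc
    have h2 := hdown (i1 - (Pd : Fin P)) hc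
    rw [show i1 - (Pd : Fin P) + 1 + (Pd : Fin P) = i1 + 1 by ring,
        show i1 - (Pd : Fin P) + (Pd : Fin P) = i1 by ring] at h2
    exact absurd (hmin (i1 + 1)) (not_le.mpr h2)
  -- dispatch the case Pd = P
  rcases eq_or_lt_of_le hPPd with hPeq | hPlt
  · exfalso
    have hz : ((Pd : ℕ) : Fin P) = 0 := by rw [hPeq]; exact Fin.natCast_self P
    rw [hz, sub_zero] at S0
    linarith
  -- final pigeonhole
  by_contra hfin
  push_neg at hfin
  classical
  have hcast : ∀ x : ℕ, x < P → ((x : Fin P) : ℕ) = x := fun x hx => Fin.val_cast_of_lt hx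
  have hcinj : ∀ (c : Fin P) (x y : ℕ), x < P → y < P →
      (c + (x : Fin P) = c + (y : Fin P)) → x = y := by
    intro c x y hx hy hxy
    have h2 : (x : Fin P) = (y : Fin P) := add_left_cancel hxy
    have h3 := congrArg Fin.val h2
    rwa [hcast x hx, hcast y hy] at h3
  have hIpf : ∀ m : ℕ, m < Pd →
      (0 ≤ uP (i0 - (Pd : Fin P) + 1 + (m : Fin P)) ∧
        (1 ≤ m → 0 < uP (i0 - (Pd : Fin P) + 1 + (m : Fin P)))) := by
    intro m hm
    rcases Nat.eq_zero_or_pos m with rfl | hm1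
    · refine ⟨?_, fun h1 => absurd h1 (by omega)⟩
      rw [Nat.cast_zero, add_zero]
      exact S1
    · have key : 0 < uP (i0 - (Pd : Fin P) + 1 + (m : Fin P)) := by
        rcases eq_or_lt_of_le (show m + 1 ≤ Pd by omega) with he | hlt2
        · rw [show i0 - (Pd : Fin P) + 1 + ((m : ℕ) : Fin P) = i0 by
            rw [show m = Pd - 1 by omega, Nat.cast_sub (by omega : 1 ≤ Pd), Nat.cast_one]
            ring]
          exact hi0pos
        · by_contra hcc
          push_neg at hcc
          rw [show i0 - (Pd : Fin P) + 1 + ((m : ℕ) : Fin P)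
              = i0 - (Pd : Fin P) + (((m + 1 : ℕ)) : Fin P) by push_cast; ring] at hcc
          exact SK_pos uP hS2 Pd i0 hi0pos (m + 1) (by omega) (by omega) hPlt S0 S1 hcc
      exact ⟨key.le, fun _ => key⟩
  have hInf : ∀ m : ℕ, m < Pd →
      (uP (i1 - (Pd : Fin P) + 1 + (m : Fin P)) ≤ 0 ∧
        (1 ≤ m → uP (i1 - (Pd : Fin P) + 1 + (m : Fin P)) < 0)) := by
    intro m hm
    rcases Nat.eq_zero_or_pos m with rfl | hm1
    · refine ⟨?_, fun h1 => absurd h1 (by omega)⟩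
      rw [Nat.cast_zero, add_zero]
      exact S1'
    · have key : uP (i1 - (Pd : Fin P) + 1 + (m : Fin P)) < 0 := by
        rcases eq_or_lt_of_le (show m + 1 ≤ Pd by omega) with he | hlt2
        · rw [show i1 - (Pd : Fin P) + 1 + ((m : ℕ) : Fin P) = i1 by
            rw [show m = Pd - 1 by omega, Nat.cast_sub (by omega : 1 ≤ Pd), Nat.cast_one]
            ring]
          exact hi1neg
        · by_contra hcc
          push_neg at hcc
          rw [show i1 - (Pd : Fin P) + 1 + ((m : ℕ) : Fin P)
              = i1 - (Pd : Fin P) + (((m + 1 : ℕ)) : Fin P) by push_cast; ring] at hcc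
          exact SK_neg uP hS2 Pd i1 hi1neg (m + 1) (by omega) (by omega) hPlt S0' S1' hcc
      exact ⟨key.le, fun _ => key⟩
  set Ip : Finset (Fin P) :=
    (Finset.range Pd).image (fun m : ℕ => i0 - (Pd : Fin P) + 1 + (m : Fin P)) with hIp
  set In : Finset (Fin P) :=
    (Finset.range Pd).image (fun m : ℕ => i1 - (Pd : Fin P) + 1 + (m : Fin P)) with hIn
  have hcardIp : Ip.card = Pd := by
    rw [hIp]
    have hinj : Set.InjOn (fun m : ℕ => i0 - (Pd : Fin P) + 1 + (m : Fin P))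
        ↑(Finset.range Pd) := by
      intro x hx y hy hxy
      simp only [Finset.coe_range, Set.mem_Iio] at hx hy
      exact hcinj (i0 - (Pd : Fin P) + 1) x y (by omega) (by omega) hxy
    rw [Finset.card_image_of_injOn hinj, Finset.card_range]
  have hcardIn : In.card = Pd := by
    rw [hIn]
    have hinj : Set.InjOn (fun m : ℕ => i1 - (Pd : Fin P) + 1 + (m : Fin P))
        ↑(Finset.range Pd) := by
      intro x hx y hy hxy
      simp only [Finset.coe_range, Set.mem_Iio] at hx hy
      exact hcinj (i1 - (Pd : Fin P) + 1) x y (by omega) (by omega) hxy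
    rw [Finset.card_image_of_injOn hinj, Finset.card_range]
  have hUcard : (Ip ∪ In).card ≤ P := by
    calc (Ip ∪ In).card ≤ Fintype.card (Fin P) := Finset.card_le_univ _
      _ = P := Fintype.card_fin P
  have hIcard : 0 < (Ip ∩ In).card := by
    have hh := Finset.card_union_add_card_inter Ip In
    omega
  obtain ⟨j, hj⟩ := Finset.card_pos.mp hIcard
  rw [Finset.mem_inter] at hj
  obtain ⟨hjp, hjn⟩ := hj
  rw [hIp, Finset.mem_image] at hjp
  obtain ⟨m, hmr, hjm⟩ := hjp
  rw [hIn, Finset.mem_image] at hjn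
  obtain ⟨m', hmr', hjm'⟩ := hjn
  rw [Finset.mem_range] at hmr hmr'
  have hjm2 : i0 - (Pd : Fin P) + 1 + (m : Fin P) = j := hjm
  have hjm2' : i1 - (Pd : Fin P) + 1 + (m' : Fin P) = j := hjm'
  subst hjm2
  obtain ⟨hge, hgt⟩ := hIpf m hmr
  obtain ⟨hle', hlt'⟩ := hInf m' hmr'
  rw [hjm2'] at hle' hlt'
  rcases Nat.eq_zero_or_pos m with rfl | hm1
  · rcases Nat.eq_zero_or_pos m' with rfl | hm1'
    · have hbb : i1 - (Pd : Fin P) + 1 = i0 - (Pd : Fin P) + 1 := by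
        simpa using hjm2'
      have hii : i1 = i0 := by linear_combination hbb
      rw [hii] at hi1neg
      linarith
    · have h5 := hlt' hm1'
      linarith
  · have h5 := hgt hm1
    linarith
end

section
/- Consider the delayed relay feedback system u^P = −Q_P^{P_d} H_{ḡ₀^P} sign(u^P) with P_d ≥ 1 and g₀ ∈ ℓ¹ strictly positive and strictly decreasing on its support {0,1,2,…}. Define P_s as the smallest t such that ∑_{k=0}^{t−1} g₀(k) − ∑_{k=t}^{∞} g₀(k) > 0. Then any self-oscillation u ∈ ℓ∞(P) with S_c⁻(Δ_c u^P) = 2, S_c⁺(u^P) = 2 and P ≥ P_d satisfies P ≤ 2(P_d + P_s). -/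
open scoped BigOperators

open Fin.NatCast

namespace Aux


noncomputable def nChanges (m : List ℝ) : ℕ := (m.zip m.tail).countP (fun p => decide (p.1 * p.2 < 0))

lemma nChanges_cons (a b : ℝ) (t : List ℝ) :
    nChanges (a :: b :: t) = nChanges (b :: t) + (if a * b < 0 then 1 else 0) := by
  unfold nChanges
  simp only [List.zip_cons_cons, List.tail_cons, List.countP_cons, decide_eq_true_eq]

lemma nChanges_le_cons (a : ℝ) (m : List ℝ) : nChanges m ≤ nChanges (a :: m) := by
  cases m with
  | nil => simp [nChanges]
  | cons b t => rw [nChanges_cons]; omega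

/-- core: alternations of a sublist bound changes from below. -/
lemma core : ∀ (m : List ℝ), (∀ x ∈ m, x ≠ 0) → ∀ (x : ℝ), x ≠ 0 →
    ∀ (s : List ℝ), s.Sublist m → List.Chain' (fun a b => a * b < 0) (x :: s) →
    s.length ≤ nChanges (x :: m) := by
  intro m
  induction m with
  | nil =>
    intro _ x _ s hs _
    simp [List.sublist_nil.mp hs]
  | cons b m' ih =>
    intro hnz x hx s hs hch
    have hb : b ≠ 0 := hnz b (by simp)
    have hnz' : ∀ y ∈ m', y ≠ 0 := fun y hy => hnz y (by simp [hy])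
    cases s with
    | nil => simp
    | cons y s'' =>
      have hxy : x * y < 0 := (List.isChain_cons_cons.mp hch).1
      have hch' : List.Chain' (fun a b => a * b < 0) (y :: s'') := (List.isChain_cons_cons.mp hch).2
      by_cases hxb : x * b < 0
      · -- b has sign opposite to x, same as y
        have hs'' : s''.Sublist m' := by
          cases hs with
          | cons _ h => exact (List.sublist_cons_self y s'').trans h
          | cons_cons _ h => exact h
        have hby : b * y > 0 := by nlinarith [mul_pos_of_neg_of_neg hxy hxb, sq_nonneg x]
        have hchb : List.Chain' (fun a b => a * b < 0) (b :: s'') := by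
          cases s'' with
          | nil => exact List.isChain_singleton _
          | cons z t =>
            have hyz : y * z < 0 := (List.isChain_cons_cons.mp hch').1
            refine List.isChain_cons_cons.mpr ⟨?_, (List.isChain_cons_cons.mp hch').2⟩
            nlinarith [sq_nonneg y]
        have := ih hnz' b hb s'' hs'' hchb
        rw [nChanges_cons]
        simp only [if_pos hxb, List.length_cons]
        omega
      · have hxb' : 0 < x * b := lt_of_le_of_ne (not_lt.mp hxb)
          (fun h => (mul_ne_zero hx hb) h.symm)
        have hsub : (y :: s'').Sublist m' := by
          cases hs with
          | cons _ h => exact h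
          | cons_cons _ h =>
            exact (hxb hxy).elim
        have hby : b * y < 0 := by nlinarith [sq_nonneg x]
        have hchb : List.Chain' (fun a b => a * b < 0) (b :: y :: s'') :=
          List.isChain_cons_cons.mpr ⟨hby, hch'⟩
        have := ih hnz' b hb (y :: s'') hsub hchb
        rw [nChanges_cons]
        simp only [if_neg hxb]
        simpa using this

lemma wrapper : ∀ (m : List ℝ), (∀ x ∈ m, x ≠ 0) →
    ∀ (s : List ℝ), s.Sublist m → List.Chain' (fun a b => a * b < 0) s →
    s.length ≤ nChanges m + 1 := by
  intro m
  induction m with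
  | nil => intro _ s hs _; simp [List.sublist_nil.mp hs]
  | cons b m' ih =>
    intro hnz s hs hch
    cases s with
    | nil => simp
    | cons x s' =>
      cases hs with
      | cons _ h =>
        have := ih (fun y hy => hnz y (by simp [hy])) (x :: s') h hch
        have := nChanges_le_cons b m'
        omega
      | cons_cons _ h =>
        have := core m' (fun y hy => hnz y (by simp [hy])) b (hnz b (by simp)) s' h hch
        simpa using Nat.add_le_add_right this 1

lemma lower (l s : List ℝ) (hs : s.Sublist l) (hnz : ∀ x ∈ s, x ≠ 0)
    (hch : List.Chain' (fun a b => a * b < 0) s) :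
    (s.length : ℤ) - 1 ≤ signChangesList l := by
  classical
  have hsub : s.Sublist (l.filter (fun x => decide (x ≠ 0))) := by
    have h1 : s.filter (fun x => decide (x ≠ 0)) = s := by
      rw [List.filter_eq_self]; intro a ha; simpa using hnz a ha
    conv_lhs => rw [← h1]
    exact hs.filter _
  have hnznz : ∀ x ∈ (l.filter (fun x => decide (x ≠ 0))), x ≠ 0 := by
    intro x hxm
    have := List.of_mem_filter hxm
    simpa using this
  have hval : signChangesList l = if (l.filter fun x => decide (x ≠ 0)).isEmpty then (-1:ℤ)
      else (nChanges (l.filter fun x => decide (x ≠ 0)) : ℤ) := rfl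
  rw [hval]
  by_cases he : (l.filter fun x => decide (x ≠ 0)).isEmpty
  · rw [if_pos he]
    have h0 : (l.filter fun x => decide (x ≠ 0)) = [] := List.isEmpty_iff.mp he
    rw [h0] at hsub
    have : s = [] := List.sublist_nil.mp hsub
    simp [this]
  · rw [if_neg he]
    have := wrapper _ hnznz s hsub hch
    omega

lemma scl_le_len (l : List ℝ) : signChangesList l ≤ (l.length : ℤ) := by
  have hval : signChangesList l = if (l.filter fun x => decide (x ≠ 0)).isEmpty then (-1:ℤ)
      else (nChanges (l.filter fun x => decide (x ≠ 0)) : ℤ) := rfl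
  rw [hval]
  split_ifs
  · have : (0:ℤ) ≤ l.length := by positivity
    omega
  · have h1 : nChanges (l.filter fun x => decide (x ≠ 0)) ≤ l.length := by
      calc nChanges (l.filter fun x => decide (x ≠ 0))
          ≤ ((l.filter fun x => decide (x ≠ 0)).zip
              (l.filter fun x => decide (x ≠ 0)).tail).length := List.countP_le_length
        _ ≤ (l.filter fun x => decide (x ≠ 0)).length := by
            rw [List.length_zip]; exact min_le_left _ _
        _ ≤ l.length := List.length_filter_le _ _
    exact_mod_cast h1

lemma len_cycList {n : ℕ} (w : Fin n → ℝ) (i : Fin n) : (cycList w i).length = n + 1 := by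
  simp [cycList]

lemma le_Scminus {n : ℕ} (w : Fin n → ℝ) (i : Fin n) :
    signChangesList (cycList w i) ≤ Scminus w := by
  apply le_csSup
  · refine ⟨(n:ℤ)+1, ?_⟩
    rintro z ⟨j, rfl⟩
    have := scl_le_len (cycList w j)
    rwa [len_cycList, Nat.cast_add, Nat.cast_one] at this
  · exact ⟨i, rfl⟩

lemma Scminus_le_bound {n : ℕ} (hn : 0 < n) (w : Fin n → ℝ) : Scminus w ≤ (n:ℤ)+1 := by
  have hne : {z : ℤ | ∃ i : Fin n, z = signChangesList (cycList w i)}.Nonempty :=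
    ⟨_, ⟨⟨0, hn⟩, rfl⟩⟩
  refine csSup_le hne ?_
  rintro z ⟨j, rfl⟩
  have := scl_le_len (cycList w j)
  rwa [len_cycList, Nat.cast_add, Nat.cast_one] at this

lemma le_Scplus {n : ℕ} (hn : 0 < n) (v w : Fin n → ℝ) (hf : FillsZeros v w) :
    Scminus w ≤ Scplus v := by
  apply le_csSup
  · refine ⟨(n:ℤ)+1, ?_⟩
    rintro z ⟨w', _, rfl⟩
    exact Scminus_le_bound hn w'
  · exact ⟨w, hf, rfl⟩

lemma quad {P : ℕ} (w : Fin P → ℝ) (i : Fin P) (x y z : Fin P)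
    (h0x : 0 < x.val) (hxy : x.val < y.val) (hyz : y.val < z.val)
    (p1 : w i * w (i+x) < 0) (p2 : w (i+x) * w (i+y) < 0) (p3 : w (i+y) * w (i+z) < 0) :
    3 ≤ signChangesList (cycList w i) := by
  have hP : 0 < P := lt_of_le_of_lt (Nat.zero_le _) z.isLt
  have hlen : (cycList w i).length = P + 1 := len_cycList w i
  have hget : ∀ t : Fin P, (cycList w i)[t.val]'(by omega) = w (i + t) := by
    intro t
    have ht : t.val < (List.ofFn fun j : Fin P => w (i + j)).length := by
      simpa using t.isLt
    unfold cycList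
    rw [List.getElem_append_left ht, List.getElem_ofFn]
  have hi0 : i + (⟨0, hP⟩ : Fin P) = i := by
    apply Fin.ext; simp [Fin.add_def, Nat.mod_eq_of_lt i.isLt]
  set s : List ℝ := [w i, w (i+x), w (i+y), w (i+z)] with hs
  have hnz : ∀ a ∈ s, a ≠ 0 := by
    intro a ha
    simp only [hs, List.mem_cons, List.not_mem_nil, or_false] at ha
    rcases ha with h|h|h|h <;> subst h <;> intro h0 <;>
      [ (rw [h0, zero_mul] at p1; exact lt_irrefl 0 p1);
        (rw [h0, zero_mul] at p2; exact lt_irrefl 0 p2);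
        (rw [h0, zero_mul] at p3; exact lt_irrefl 0 p3);
        (rw [h0, mul_zero] at p3; exact lt_irrefl 0 p3) ]
  have hch : List.Chain' (fun a b => a * b < 0) s :=
    List.isChain_cons_cons.mpr ⟨p1, List.isChain_cons_cons.mpr ⟨p2,
      List.isChain_cons_cons.mpr ⟨p3, List.isChain_singleton _⟩⟩⟩
  have hsub : s.Sublist (cycList w i) := by
    have hmap : s = List.map (cycList w i).get
        [⟨0, by omega⟩, ⟨x.val, by omega⟩, ⟨y.val, by omega⟩, ⟨z.val, by omega⟩] := by
      simp only [List.map_cons, List.map_nil, List.get_eq_getElem, hs]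
      rw [show (cycList w i)[0]'(by omega) = w i
          from (hget ⟨0, hP⟩).trans (by rw [hi0]), hget x, hget y, hget z]
    rw [hmap]
    apply List.map_getElem_sublist
    simp only [List.pairwise_cons, List.mem_cons, List.not_mem_nil]
    refine ⟨?_, ?_, ?_, by simp⟩ <;> intro a ha <;>
      · rcases ha with h|h|h|h <;> first | (subst h; simp; omega) | simp at h
  have := lower (cycList w i) s hsub hnz hch
  rw [hs] at this
  simpa using this



lemma sign_bds (r : ℝ) : -1 ≤ Real.sign r ∧ Real.sign r ≤ 1 := by
  rcases lt_trichotomy r 0 with h | h | h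
  · rw [Real.sign_of_neg h]; norm_num
  · rw [h, Real.sign_zero]; norm_num
  · rw [Real.sign_of_pos h]; norm_num

lemma Qmat_mulVec {P : ℕ} [NeZero P] (v : Fin P → ℝ) (i : Fin P) :
    (Qmat P).mulVec v i = v (i - 1) := by
  have hval : ∀ j : Fin P, ((j + 1 : Fin P) : ℕ) = (j.val + 1) % P := by
    intro j
    rw [Fin.add_def, Fin.val_one']
    exact Nat.add_mod_mod _ _ _
  simp only [Matrix.mulVec, dotProduct, Qmat, Matrix.of_apply]
  rw [Finset.sum_eq_single (i - 1)]
  · have hcond : (i : ℕ) = (((i - 1 : Fin P)).val + 1) % P := by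
      rw [← hval (i - 1), sub_add_cancel]
    rw [if_pos hcond, one_mul]
  · intro j _ hj
    rw [if_neg, zero_mul]
    intro hc
    apply hj
    have hij : i = j + 1 := Fin.ext (by rw [hval]; exact hc)
    rw [hij, add_sub_cancel_right]
  · intro h; exact absurd (Finset.mem_univ _) h

lemma Qpow_mulVec {P : ℕ} [NeZero P] (d : ℕ) (v : Fin P → ℝ) (i : Fin P) :
    ((Qmat P) ^ d).mulVec v i = v (i - ((d : ℕ) : Fin P)) := by
  induction d generalizing v i with
  | zero => simp [Matrix.one_mulVec]
  | succ d ih =>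
    rw [pow_succ, ← Matrix.mulVec_mulVec, ih ((Qmat P).mulVec v) i, Qmat_mulVec]
    congr 1
    rw [sub_sub]
    congr 1
    push_cast
    ring

lemma key {P Pd Ps : ℕ} [NeZero P] (hP : 0 < P) (hLP : Pd + Ps < P) (hPs : 0 < Ps)
    (c : Fin P → ℝ) (hc : ∀ k, 0 ≤ c k)
    (hAB : ∑ k ∈ Finset.univ.filter (fun k : Fin P => ¬ k.val < Ps), c k
         < ∑ k ∈ Finset.univ.filter (fun k : Fin P => k.val < Ps), c k)
    (v : Fin P → ℝ)
    (heq : ∀ i, v i = -∑ j, c (i - ((Pd : ℕ) : Fin P) - j) * Real.sign (v j))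
    (i0 : Fin P) (hrun : ∀ τ : ℕ, τ < Pd + Ps → 0 < v (i0 - ((τ : ℕ) : Fin P))) :
    False := by
  set Pdc : Fin P := ((Pd : ℕ) : Fin P) with hPdc
  have hreidx : ∑ j, c (i0 - Pdc - j) * Real.sign (v j)
      = ∑ k, c k * Real.sign (v (i0 - Pdc - k)) := by
    rw [← Equiv.sum_comp (Equiv.subLeft (i0 - Pdc))
        (fun j => c (i0 - Pdc - j) * Real.sign (v j))]
    apply Finset.sum_congr rfl
    intro k _
    simp [Equiv.subLeft, sub_sub_cancel]
  have hsplit := Finset.sum_filter_add_sum_filter_not Finset.univ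
    (fun k : Fin P => k.val < Ps) (fun k => c k * Real.sign (v (i0 - Pdc - k)))
  have h1 : ∑ k ∈ Finset.univ.filter (fun k : Fin P => k.val < Ps),
      c k * Real.sign (v (i0 - Pdc - k))
      = ∑ k ∈ Finset.univ.filter (fun k : Fin P => k.val < Ps), c k := by
    apply Finset.sum_congr rfl
    intro k hk
    have hkPs : k.val < Ps := by simpa using hk
    have hidx : i0 - Pdc - k = i0 - (((Pd + k.val : ℕ)) : Fin P) := by
      rw [sub_sub, hPdc]
      congr 1
      rw [Nat.cast_add, Fin.cast_val_eq_self]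
    have hpos := hrun (Pd + k.val) (by omega)
    rw [hidx, Real.sign_of_pos hpos, mul_one]
  have h2 : -∑ k ∈ Finset.univ.filter (fun k : Fin P => ¬ k.val < Ps), c k
      ≤ ∑ k ∈ Finset.univ.filter (fun k : Fin P => ¬ k.val < Ps),
        c k * Real.sign (v (i0 - Pdc - k)) := by
    rw [← Finset.sum_neg_distrib]
    apply Finset.sum_le_sum
    intro k _
    have := sign_bds (v (i0 - Pdc - k))
    nlinarith [hc k]
  have hv0 : 0 < v i0 := by
    have := hrun 0 (by omega)
    simpa using this
  have hvi0 := heq i0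
  rw [hreidx, ← hsplit] at hvi0
  nlinarith

lemma summable_finsetSum {γ : Type*} (s : Finset γ) (f : γ → ℕ → ℝ)
    (h : ∀ i ∈ s, Summable (f i)) : Summable (fun x => ∑ i ∈ s, f i x) := by
  classical
  induction s using Finset.induction with
  | empty => simpa using summable_zero
  | insert a s hni ih =>
    simp only [Finset.sum_insert hni]
    exact (h _ (Finset.mem_insert_self _ _)).add
      (ih fun i hi => h i (Finset.mem_insert_of_mem hi))

lemma ana {P Ps : ℕ} [NeZero P] (hPsP : Ps < P) (g0 : ℤ → ℝ) (hg : Summable g0)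
    (hg0nn : ∀ t, 0 ≤ g0 t) (hzero : ∀ t : ℤ, t < 0 → g0 t = 0)
    (hA : (∑ k ∈ Finset.range Ps, g0 (k : ℤ)) - (∑' k : ℕ, g0 ((Ps:ℤ) + (k:ℤ))) > 0) :
    ∑ k ∈ Finset.univ.filter (fun k : Fin P => ¬ k.val < Ps), pbar g0 P k
      < ∑ k ∈ Finset.univ.filter (fun k : Fin P => k.val < Ps), pbar g0 P k := by
  have hP : 0 < P := Nat.pos_of_ne_zero (NeZero.ne P)
  set h : ℕ → ℝ := fun n => g0 ((Ps:ℤ) + (n:ℤ)) with hh_def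
  have hh : Summable h := by
    apply hg.comp_injective
    intro a b hab
    simpa using hab
  have hhn : ∀ n, 0 ≤ h n := fun n => hg0nn _
  -- summability of the fibers
  have hSK : ∀ k : Fin P, Summable (fun m : ℤ => g0 (((k:ℕ):ℤ) + m * (P:ℤ))) := by
    intro k
    apply hg.comp_injective
    intro a b hab
    simp only at hab
    have h2 : a * (P:ℤ) = b * (P:ℤ) := by linarith
    exact mul_right_cancel₀ (by exact_mod_cast hP.ne') h2
  -- pbar dominates the principal term
  have hterm : ∀ k : Fin P, g0 ((k:ℕ):ℤ) ≤ pbar g0 P k := by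
    intro k
    have := (hSK k).le_tsum 0 (fun j _ => hg0nn _)
    simpa [pbar] using this
  -- the A-side
  have hAeq : ∑ k ∈ Finset.range Ps, g0 ((k:ℕ):ℤ)
      = ∑ k ∈ Finset.univ.filter (fun k : Fin P => k.val < Ps), g0 ((k.val:ℕ):ℤ) := by
    apply Finset.sum_nbij' (fun a => (⟨a % P, Nat.mod_lt a hP⟩ : Fin P)) (fun b => b.val)
    · intro a ha
      simp only [Finset.mem_range] at ha
      simp only [Finset.mem_filter, Finset.mem_univ, true_and]
      rw [Nat.mod_eq_of_lt (lt_trans ha hPsP)]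
      exact ha
    · intro b hb; simp at hb ⊢; omega
    · intro a ha; simp at ha ⊢; exact Nat.mod_eq_of_lt (by omega)
    · intro b _; exact Fin.ext (Nat.mod_eq_of_lt b.isLt)
    · intro a ha
      simp only [Finset.mem_range] at ha
      congr 1
      exact_mod_cast (Nat.mod_eq_of_lt (lt_trans ha hPsP)).symm
  have hAle : ∑ k ∈ Finset.range Ps, g0 ((k:ℕ):ℤ)
      ≤ ∑ k ∈ Finset.univ.filter (fun k : Fin P => k.val < Ps), pbar g0 P k := by
    rw [hAeq]
    exact Finset.sum_le_sum (fun k _ => hterm k)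
  -- the B-side
  have hBle : ∑ k ∈ Finset.univ.filter (fun k : Fin P => ¬ k.val < Ps), pbar g0 P k
      ≤ ∑' n : ℕ, h n := by
    set S := Finset.univ.filter (fun k : Fin P => ¬ k.val < Ps) with hS_def
    set e : Fin P → ℕ → ℕ := fun k n => (k.val - Ps) + n * P with he_def
    have he_inj : ∀ k : Fin P, Function.Injective (e k) := by
      intro k a b hab
      simp only [he_def] at hab
      have h2 := Nat.add_left_cancel hab
      exact Nat.eq_of_mul_eq_mul_right hP h2
    have hck : ∀ k ∈ S, pbar g0 P k = ∑' x : ℕ, (Set.range (e k)).indicator h x := by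
      intro k hk
      have hks : Ps ≤ k.val := by
        simp only [hS_def, Finset.mem_filter] at hk
        omega
      have step1 : pbar g0 P k = ∑' n : ℕ, g0 (((k:ℕ):ℤ) + (n:ℤ) * (P:ℤ)) := by
        unfold pbar
        refine (Function.Injective.tsum_eq (Nat.cast_injective : Function.Injective (Nat.cast : ℕ → ℤ)) ?_).symm
        intro m hm
        rcases le_or_gt 0 m with hm0 | hm0
        · exact ⟨m.toNat, Int.toNat_of_nonneg hm0⟩
        · exfalso
          apply hm
          apply hzero
          have hm1 : m ≤ -1 := by omega
          have : m * (P:ℤ) ≤ (-1) * (P:ℤ) :=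
            mul_le_mul_of_nonneg_right hm1 (by positivity)
          have hkP : ((k:ℕ):ℤ) < (P:ℤ) := by exact_mod_cast k.isLt
          linarith
      have step2 : ∀ n : ℕ, g0 (((k:ℕ):ℤ) + (n:ℤ) * (P:ℤ)) = h (e k n) := by
        intro n
        simp only [hh_def, he_def]
        congr 1
        push_cast [Nat.cast_sub hks]
        ring
      have step3 : (∑' n : ℕ, h (e k n)) = ∑' x : ℕ, (Set.range (e k)).indicator h x := by
        rw [tsum_congr (fun n => (Set.indicator_of_mem (Set.mem_range_self n) h).symm)]
        exact Function.Injective.tsum_eq (he_inj k) Set.support_indicator_subset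
      rw [step1, tsum_congr step2, step3]
    rw [Finset.sum_congr rfl hck]
    rw [← Summable.tsum_finsetSum (fun k _ => hh.indicator _)]
    apply Summable.tsum_le_tsum _ (summable_finsetSum S _ (fun k _ => hh.indicator _)) hh
    intro x
    by_cases hex : ∃ k0 ∈ S, x ∈ Set.range (e k0)
    · obtain ⟨k0, hk0S, hk0r⟩ := hex
      rw [Finset.sum_eq_single k0]
      · rw [Set.indicator_of_mem hk0r]
      · intro k hkS hne
        apply Set.indicator_of_notMem
        rintro ⟨n, hn⟩
        obtain ⟨n0, hn0⟩ := hk0r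
        apply hne
        have hks : Ps ≤ k.val := by
          simp only [hS_def, Finset.mem_filter] at hkS; omega
        have hk0s : Ps ≤ k0.val := by
          simp only [hS_def, Finset.mem_filter] at hk0S; omega
        have e1 : (k.val - Ps) = x % P := by
          rw [← hn]; simp only [he_def]
          rw [Nat.add_mul_mod_self_right, Nat.mod_eq_of_lt (by omega)]
        have e2 : (k0.val - Ps) = x % P := by
          rw [← hn0]; simp only [he_def]
          rw [Nat.add_mul_mod_self_right, Nat.mod_eq_of_lt (by omega)]
        apply Fin.ext
        omega
      · intro hcon; exact absurd hk0S hcon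
    · push_neg at hex
      rw [Finset.sum_eq_zero (fun k hk => Set.indicator_of_notMem (hex k hk) _)]
      exact hhn x
  linarith


end Aux

namespace Aux

lemma scplus_contra {P : ℕ} (hP : 0 < P) (uP w : Fin P → ℝ) (hfill : FillsZeros uP w)
    (i : Fin P) (h3 : 3 ≤ signChangesList (cycList w i)) (hS2 : Scplus uP = 2) : False := by
  have h := le_trans h3 (le_trans (le_Scminus w i) (le_Scplus hP uP w hfill))
  rw [hS2] at h
  norm_num at h

end Aux

/-- For the delayed relay feedback system `u^P = -Q_P^{P_d} H_{ḡ₀^P} sign(u^P)` with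
`P_d ≥ 1` and `g₀ ∈ ℓ¹` strictly positive and strictly decreasing on its support
`{0,1,2,…}`, with `P_s` the smallest `t` with `∑_{k<t} g₀(k) - ∑_{k≥t} g₀(k) > 0`,
any self-oscillation `u ∈ ℓ∞(P)` with `S_c⁻(Δ_c u^P) = 2`, `S_c⁺(u^P) = 2` and
`P ≥ P_d` satisfies `P ≤ 2 (P_d + P_s)`. -/
theorem stmt14 (P Pd : ℕ) (hPd : 1 ≤ Pd) (hPPd : Pd ≤ P)
    (g0 : ℤ → ℝ) (hg : Summable g0)
    (hsupp : Function.support g0 = {t : ℤ | 0 ≤ t})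
    (hpos : ∀ t : ℤ, 0 ≤ t → 0 < g0 t)
    (hdec : ∀ t : ℤ, 0 ≤ t → g0 (t + 1) < g0 t)
    (Ps : ℕ)
    (hPs : IsLeast {t : ℕ |
      (∑ k ∈ Finset.range t, g0 (k : ℤ)) - (∑' k : ℕ, g0 ((t : ℤ) + (k : ℤ))) > 0} Ps)
    (u : ℤ → ℝ) (hb : ∃ C : ℝ, ∀ t, |u t| ≤ C) (hper : ∀ t : ℤ, u (t + P) = u t)
    (uP : Fin P → ℝ) (huP : uP = fun i : Fin P => u ((i : ℕ) : ℤ))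
    (hS1 : Scminus (cdiff uP) = 2) (hS2 : Scplus uP = 2)
    (hfix : uP = -((Qmat P ^ Pd).mulVec
      ((Matrix.circulant (pbar g0 P)).mulVec fun i => Real.sign (uP i)))) :
    P ≤ 2 * (Pd + Ps) := by
  haveI : NeZero P := ⟨by omega⟩
  by_contra hcon
  push_neg at hcon
  have hP2 : 2 * (Pd + Ps) + 1 ≤ P := by omega
  have hP : 0 < P := by omega
  clear hb hper hS1
  -- basic facts about g0
  have hzero : ∀ t : ℤ, t < 0 → g0 t = 0 := by
    intro t ht
    by_contra h0
    have hmem : t ∈ Function.support g0 := h0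
    rw [hsupp] at hmem
    simp only [Set.mem_setOf_eq] at hmem
    omega
  have hg0nn : ∀ t : ℤ, 0 ≤ g0 t := by
    intro t
    rcases le_or_gt 0 t with h | h
    · exact (hpos t h).le
    · rw [hzero t h]
  have hA := hPs.1
  simp only [Set.mem_setOf_eq] at hA
  have hPs1 : 1 ≤ Ps := by
    by_contra h0
    have hps0 : Ps = 0 := by omega
    rw [hps0] at hA
    simp only [Finset.range_zero, Finset.sum_empty, Nat.cast_zero] at hA
    have hnn : 0 ≤ ∑' k : ℕ, g0 ((0:ℤ) + (k:ℤ)) := tsum_nonneg (fun k => hg0nn _)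
    linarith
  -- componentwise fixed point equation
  set c : Fin P → ℝ := pbar g0 P with hc_def
  have heq : ∀ i : Fin P, uP i
      = -∑ j, c (i - ((Pd : ℕ) : Fin P) - j) * Real.sign (uP j) := by
    intro i
    have h1 := congrFun hfix i
    rw [Pi.neg_apply, Aux.Qpow_mulVec] at h1
    refine h1.trans ?_
    congr 1
    all_goals simp [Matrix.mulVec, dotProduct, Matrix.circulant_apply]
  have hc : ∀ k, 0 ≤ c k := fun k => tsum_nonneg (fun m => hg0nn _)
  have hsle : ∀ r : ℝ, r ≤ 0 → Real.sign r ≤ 0 := by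
    intro r hr
    rcases lt_or_eq_of_le hr with h | h
    · rw [Real.sign_of_neg h]; norm_num
    · rw [h, Real.sign_zero]
  have hsge : ∀ r : ℝ, 0 ≤ r → 0 ≤ Real.sign r := by
    intro r hr
    rcases lt_or_eq_of_le hr with h | h
    · rw [Real.sign_of_pos h]; norm_num
    · rw [← h, Real.sign_zero]
  by_cases hexp : ∃ i, 0 < uP i
  · by_cases hexn : ∃ i, uP i < 0
    · -- MAIN CASE
      obtain ⟨a0, ha0⟩ := hexp
      obtain ⟨b0, hb0⟩ := hexn
      classical
      set N : Finset ℕ :=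
        (Finset.Ico 1 P).filter (fun t => uP (a0 + ((t : ℕ) : Fin P)) ≤ 0) with hN_def
      have hNne : N.Nonempty := by
        refine ⟨(b0 - a0).val, ?_⟩
        have hba : a0 + (((b0 - a0).val : ℕ) : Fin P) = b0 := by
          rw [Fin.cast_val_eq_self, add_comm, sub_add_cancel]
        rw [hN_def, Finset.mem_filter, Finset.mem_Ico]
        refine ⟨⟨?_, (b0 - a0).isLt⟩, by rw [hba]; exact hb0.le⟩
        by_contra h0
        have hv0 : (b0 - a0).val = 0 := by omega
        have hsub0 : b0 - a0 = 0 := Fin.ext (by simpa using hv0)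
        have hba' : b0 = a0 := by rwa [sub_eq_zero] at hsub0
        rw [hba'] at hb0; linarith
      set n1 := N.min' hNne with hn1_def
      set n2 := N.max' hNne with hn2_def
      have hn1N : n1 ∈ N := N.min'_mem hNne
      have hn2N : n2 ∈ N := N.max'_mem hNne
      have hn1b : 1 ≤ n1 ∧ n1 < P := by
        have h := hn1N; rw [hN_def, Finset.mem_filter, Finset.mem_Ico] at h
        exact ⟨h.1.1, h.1.2⟩
      have hn2b : 1 ≤ n2 ∧ n2 < P := by
        have h := hn2N; rw [hN_def, Finset.mem_filter, Finset.mem_Ico] at h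
        exact ⟨h.1.1, h.1.2⟩
      have hn12 : n1 ≤ n2 := N.min'_le _ hn2N
      have hn1u : uP (a0 + ((n1 : ℕ) : Fin P)) ≤ 0 := by
        have h := hn1N; rw [hN_def, Finset.mem_filter] at h; exact h.2
      have hn2u : uP (a0 + ((n2 : ℕ) : Fin P)) ≤ 0 := by
        have h := hn2N; rw [hN_def, Finset.mem_filter] at h; exact h.2
      have hout : ∀ t, t < P → (t < n1 ∨ n2 < t) → 0 < uP (a0 + ((t : ℕ) : Fin P)) := by
        intro t htP htor
        rcases Nat.eq_zero_or_pos t with ht0 | ht1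
        · subst ht0; simpa using ha0
        · by_contra hle
          push_neg at hle
          have htN : t ∈ N := by
            rw [hN_def, Finset.mem_filter, Finset.mem_Ico]; exact ⟨⟨ht1, htP⟩, hle⟩
          rcases htor with h | h
          · exact absurd (N.min'_le t htN) (by omega)
          · exact absurd (N.le_max' t htN) (by omega)
      have hin : ∀ t, n1 < t → t < n2 → uP (a0 + ((t : ℕ) : Fin P)) < 0 := by
        intro t h1t h2t
        by_contra hge
        push_neg at hge
        set w : Fin P → ℝ := fun j => if uP j = 0 then
            (if j = a0 + ((n1 : ℕ) : Fin P) ∨ j = a0 + ((n2 : ℕ) : Fin P) then -1 else 1)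
          else uP j with hw_def
        have hfill : FillsZeros uP w := by
          intro i hi; simp only [hw_def]; rw [if_neg hi]
        have hwa0 : 0 < w a0 := by
          simp only [hw_def]; rw [if_neg (ne_of_gt ha0)]; exact ha0
        have hvcast : ∀ m, m < P → (((m : ℕ) : Fin P)).val = m :=
          fun m hm => Fin.val_cast_of_lt hm
        have hcne : ∀ m m' : ℕ, m < P → m' < P → m ≠ m' →
            a0 + ((m : ℕ) : Fin P) ≠ a0 + ((m' : ℕ) : Fin P) := by
          intro m m' hm hm' hne hcontra
          have h2 := add_left_cancel hcontra
          have h3 := congrArg Fin.val h2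
          rw [hvcast m hm, hvcast m' hm'] at h3
          exact hne h3
        have hwn1 : w (a0 + ((n1 : ℕ) : Fin P)) < 0 := by
          simp only [hw_def]
          by_cases h0 : uP (a0 + ((n1 : ℕ) : Fin P)) = 0
          · rw [if_pos h0]; norm_num
          · rw [if_neg h0]; exact lt_of_le_of_ne hn1u h0
        have hwn2 : w (a0 + ((n2 : ℕ) : Fin P)) < 0 := by
          simp only [hw_def]
          by_cases h0 : uP (a0 + ((n2 : ℕ) : Fin P)) = 0
          · rw [if_pos h0]; norm_num
          · rw [if_neg h0]; exact lt_of_le_of_ne hn2u h0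
        have hwt : 0 < w (a0 + ((t : ℕ) : Fin P)) := by
          have hcond : ¬((a0 + ((t : ℕ) : Fin P)) = a0 + ((n1 : ℕ) : Fin P)
              ∨ (a0 + ((t : ℕ) : Fin P)) = a0 + ((n2 : ℕ) : Fin P)) := by
            rintro (h | h)
            · exact hcne t n1 (by omega) (by omega) (by omega) h
            · exact hcne t n2 (by omega) (by omega) (by omega) h
          simp only [hw_def]
          by_cases h0 : uP (a0 + ((t : ℕ) : Fin P)) = 0
          · rw [if_pos h0, if_neg hcond]
            norm_num
          · rw [if_neg h0]; exact lt_of_le_of_ne hge (Ne.symm h0)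
        have hq := Aux.quad w a0 ((n1 : ℕ) : Fin P) ((t : ℕ) : Fin P) ((n2 : ℕ) : Fin P)
          (by rw [hvcast n1 (by omega)]; omega)
          (by rw [hvcast n1 (by omega), hvcast t (by omega)]; omega)
          (by rw [hvcast t (by omega), hvcast n2 (by omega)]; omega)
          (mul_neg_of_pos_of_neg hwa0 hwn1)
          (mul_neg_of_neg_of_pos hwn1 hwt)
          (mul_neg_of_pos_of_neg hwt hwn2)
        exact Aux.scplus_contra hP uP w hfill a0 hq hS2
      -- extraction of a long constant-sign run
      have hLP : Pd + Ps < P := by omega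
      have hPs0 : 0 < Ps := by omega
      have hAB := Aux.ana (P := P) (by omega : Ps < P) g0 hg hg0nn hzero hA
      by_cases hcase : Pd + Ps ≤ P - 1 - (n2 - n1)
      · -- positive run of length ≥ Pd + Ps ending at a0 + (n1 - 1)
        refine Aux.key hP hLP hPs0 c hc hAB uP heq (a0 + (((n1 - 1 : ℕ)) : Fin P)) ?_
        intro τ hτ
        set t2 : ℕ := if τ ≤ n1 - 1 then n1 - 1 - τ else n1 - 1 + P - τ with ht2_def
        have hidx : a0 + (((n1 - 1 : ℕ)) : Fin P) - ((τ : ℕ) : Fin P)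
            = a0 + ((t2 : ℕ) : Fin P) := by
          have hcast : (((n1 - 1 : ℕ)) : Fin P) = ((τ : ℕ) : Fin P) + ((t2 : ℕ) : Fin P) := by
            rw [← Nat.cast_add]
            by_cases hle : τ ≤ n1 - 1
            · congr 1; rw [ht2_def]; rw [if_pos hle]; omega
            · rw [ht2_def, if_neg hle]
              have hee : τ + (n1 - 1 + P - τ) = (n1 - 1) + P := by omega
              rw [hee, Nat.cast_add, Fin.natCast_self, add_zero]
          rw [hcast]; abel
        rw [hidx]
        apply hout
        · rw [ht2_def]; split_ifs <;> omega
        · rw [ht2_def]; split_ifs with hle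
          · left; omega
          · right; omega
      · -- negative run of length ≥ Pd + Ps ending at a0 + (n2 - 1)
        have hnegrun : Pd + Ps ≤ n2 - n1 - 1 := by omega
        refine Aux.key hP hLP hPs0 c hc hAB (fun i => -uP i) ?_
          (a0 + (((n2 - 1 : ℕ)) : Fin P)) ?_
        · intro i
          show -uP i = -∑ j, c (i - ((Pd : ℕ) : Fin P) - j) * Real.sign (-uP j)
          rw [heq i, neg_neg, ← Finset.sum_neg_distrib]
          apply Finset.sum_congr rfl
          intro j _
          rw [Real.sign_neg]
          ring
        · intro τ hτ
          have hidx : a0 + (((n2 - 1 : ℕ)) : Fin P) - ((τ : ℕ) : Fin P)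
              = a0 + (((n2 - 1 - τ : ℕ)) : Fin P) := by
            have hcast : (((n2 - 1 : ℕ)) : Fin P)
                = ((τ : ℕ) : Fin P) + (((n2 - 1 - τ : ℕ)) : Fin P) := by
              rw [← Nat.cast_add]; congr 1; omega
            rw [hcast]; abel
          rw [hidx]
          exact neg_pos.mpr (hin (n2 - 1 - τ) (by omega) (by omega))
    · -- all entries nonnegative, one positive
      push_neg at hexn
      obtain ⟨i0, hi0⟩ := hexp
      have h2 : 0 ≤ ∑ j, c (i0 - ((Pd : ℕ) : Fin P) - j) * Real.sign (uP j) :=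
        Finset.sum_nonneg (fun j _ => mul_nonneg (hc _) (hsge _ (hexn j)))
      have := heq i0
      linarith
  · push_neg at hexp
    by_cases hexn : ∃ i, uP i < 0
    · obtain ⟨i0, hi0⟩ := hexn
      have h2 : ∑ j, c (i0 - ((Pd : ℕ) : Fin P) - j) * Real.sign (uP j) ≤ 0 :=
        Finset.sum_nonpos
          (fun j _ => mul_nonpos_iff.mpr (Or.inl ⟨hc _, hsle _ (hexp j)⟩))
      have := heq i0
      linarith
    · -- uP identically zero
      push_neg at hexn
      have hall0 : ∀ i, uP i = 0 := fun i => le_antisymm (hexp i) (hexn i)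
      have hP5 : 5 ≤ P := by omega
      classical
      set w : Fin P → ℝ := fun j => if Even j.val then 1 else -1 with hw_def
      have hfill : FillsZeros uP w := fun i hi => absurd (hall0 i) hi
      have hval : ∀ t (ht : t < P),
          w ((⟨0, hP⟩ : Fin P) + ⟨t, ht⟩) = if Even t then 1 else -1 := by
        intro t ht
        have hvv : ((⟨0, hP⟩ : Fin P) + ⟨t, ht⟩).val = t := by
          rw [Fin.add_def]; simp [Nat.mod_eq_of_lt ht]
        simp only [hw_def, hvv]
      have hw0 : w (⟨0, hP⟩ : Fin P) = 1 := by
        simp [hw_def]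
      have hw1 : w ((⟨0, hP⟩ : Fin P) + ⟨1, by omega⟩) = -1 := by
        rw [hval 1 (by omega)]; simp [Nat.even_iff]
      have hw2 : w ((⟨0, hP⟩ : Fin P) + ⟨2, by omega⟩) = 1 := by
        rw [hval 2 (by omega)]; simp [Nat.even_iff]
      have hw3 : w ((⟨0, hP⟩ : Fin P) + ⟨3, by omega⟩) = -1 := by
        rw [hval 3 (by omega)]; simp [Nat.even_iff]
      have hq := Aux.quad w (⟨0, hP⟩ : Fin P) ⟨1, by omega⟩ ⟨2, by omega⟩ ⟨3, by omega⟩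
        (by norm_num) (by norm_num) (by norm_num)
        (by rw [hw0, hw1]; norm_num) (by rw [hw1, hw2]; norm_num)
        (by rw [hw2, hw3]; norm_num)
      exact Aux.scplus_contra hP uP w hfill _ hq hS2
end

section
/- Consider the delayed relay feedback system with P_d ≥ 1 and g₀ as above. A self-oscillation of period exactly P = 2P_d with sign pattern sign(u^{2P_d}) = [1,…,1 (P_d times), −1,…,−1 (P_d times)]ᵀ exists if and only if C_{g₀}(sign(u))(0) > 0, where u is the 2P_d-periodic square-wave input with that sign pattern. -/
open scoped BigOperators

namespace Stmt15Aux

/-- the convolution in "kernel-centered" form -/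
noncomputable def G (g0 s : ℤ → ℝ) (t : ℤ) : ℝ := ∑' σ : ℤ, g0 σ * s (t - σ)

variable {P : ℤ} {g0 s : ℤ → ℝ}

lemma sabs (hs' : ∀ x : ℤ, s x = if x % (2*P) < P then (1:ℝ) else -1) (x : ℤ) :
    |s x| ≤ 1 := by
  rw [hs' x]; split_ifs <;> norm_num

lemma s2P (hP : 1 ≤ P) (hs' : ∀ x : ℤ, s x = if x % (2*P) < P then (1:ℝ) else -1) (x : ℤ) :
    s (x + 2*P) = s x := by
  have h : (x + 2*P) % (2*P) = x % (2*P) := by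
    simpa using Int.add_mul_emod_self_left (a := x) (b := 2*P) (c := 1)
  rw [hs', hs', h]

lemma sP (hP : 1 ≤ P) (hs' : ∀ x : ℤ, s x = if x % (2*P) < P then (1:ℝ) else -1) (x : ℤ) :
    s (x + P) = - s x := by
  have h2P : (0:ℤ) < 2*P := by linarith
  set r := x % (2*P) with hr
  have hr0 : 0 ≤ r := Int.emod_nonneg x (by linarith)
  have hrlt : r < 2*P := Int.emod_lt_of_pos x h2P
  have hx : 2*P*(x / (2*P)) + r = x := Int.mul_ediv_add_emod x (2*P)
  by_cases hc : r < P
  · have hkey : (x + P) % (2*P) = r + P := by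
      have h1 : x + P = (r + P) + (2*P)*(x/(2*P)) := by linarith
      rw [h1, Int.add_mul_emod_self_left, Int.emod_eq_of_lt (by linarith) (by linarith)]
    rw [hs', hs', hkey, ← hr, if_pos hc, if_neg (by linarith)]
  · have hkey : (x + P) % (2*P) = r - P := by
      have h1 : x + P = (r - P) + (2*P)*(x/(2*P) + 1) := by rw [mul_add, mul_one]; linarith
      rw [h1, Int.add_mul_emod_self_left, Int.emod_eq_of_lt (by linarith) (by linarith)]
    rw [hs', hs', hkey, ← hr, if_neg hc, if_pos (by linarith)]
    norm_num

lemma sdiff (hP : 1 ≤ P) (hs' : ∀ x : ℤ, s x = if x % (2*P) < P then (1:ℝ) else -1) (x : ℤ) :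
    s x - s (x - 1) = (if x % (2*P) = 0 then (2:ℝ) else 0)
      - (if x % (2*P) = P then (2:ℝ) else 0) := by
  have h2P : (0:ℤ) < 2*P := by linarith
  set r := x % (2*P) with hr
  have hr0 : 0 ≤ r := Int.emod_nonneg x (by linarith)
  have hrlt : r < 2*P := Int.emod_lt_of_pos x h2P
  have hx : 2*P*(x / (2*P)) + r = x := Int.mul_ediv_add_emod x (2*P)
  by_cases h0 : r = 0
  · have hkey : (x - 1) % (2*P) = 2*P - 1 := by
      have h1 : x - 1 = (2*P - 1) + (2*P)*(x/(2*P) - 1) := by rw [mul_sub, mul_one]; linarith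
      rw [h1, Int.add_mul_emod_self_left, Int.emod_eq_of_lt (by linarith) (by linarith)]
    rw [hs', hs', hkey, ← hr, h0, if_pos (by linarith), if_neg (by linarith),
      if_pos rfl, if_neg (by linarith)]
    norm_num
  · have hr1 : 1 ≤ r := by omega
    have hkey : (x - 1) % (2*P) = r - 1 := by
      have h1 : x - 1 = (r - 1) + (2*P)*(x/(2*P)) := by linarith
      rw [h1, Int.add_mul_emod_self_left, Int.emod_eq_of_lt (by linarith) (by linarith)]
    rw [hs', hs', hkey, ← hr, if_neg h0]
    by_cases hc : r < P
    · rw [if_pos hc, if_pos (by linarith), if_neg (by omega)]; norm_num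
    · by_cases hcP : r = P
      · rw [if_neg hc, if_pos (by omega), if_pos hcP]; norm_num
      · rw [if_neg hc, if_neg (by omega), if_neg hcP]; norm_num

lemma sumG (hg : Summable g0) (habs : ∀ x : ℤ, |s x| ≤ 1) (t : ℤ) :
    Summable (fun σ : ℤ => g0 σ * s (t - σ)) := by
  apply Summable.of_norm_bounded (g := fun σ => |g0 σ|) hg.abs
  intro σ
  rw [Real.norm_eq_abs, abs_mul]
  calc |g0 σ| * |s (t - σ)| ≤ |g0 σ| * 1 :=
        mul_le_mul_of_nonneg_left (habs _) (abs_nonneg _)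
    _ = |g0 σ| := mul_one _

lemma convG (hg : Summable g0) (t : ℤ) : conv g0 s t = G g0 s t := by
  unfold conv G
  rw [← Equiv.tsum_eq (Equiv.subLeft t) (fun τ => g0 (t - τ) * s τ)]
  exact tsum_congr fun σ => by simp [Equiv.subLeft, sub_sub_cancel]

lemma G2P (hg : Summable g0) (hP : 1 ≤ P)
    (hs' : ∀ x : ℤ, s x = if x % (2*P) < P then (1:ℝ) else -1) (t : ℤ) :
    G g0 s (t + 2*P) = G g0 s t := by
  unfold G
  exact tsum_congr fun σ => by
    rw [show t + 2*P - σ = (t - σ) + 2*P by ring, s2P hP hs']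

lemma GP (hg : Summable g0) (hP : 1 ≤ P)
    (hs' : ∀ x : ℤ, s x = if x % (2*P) < P then (1:ℝ) else -1) (t : ℤ) :
    G g0 s (t + P) = - G g0 s t := by
  unfold G
  rw [← tsum_neg]
  exact tsum_congr fun σ => by
    rw [show t + P - σ = (t - σ) + P by ring, sP hP hs']; ring

lemma gzero (hsupp : Function.support g0 = {t : ℤ | 0 ≤ t}) {x : ℤ} (hx : x < 0) :
    g0 x = 0 := by
  by_contra h
  have : x ∈ Function.support g0 := h
  rw [hsupp] at this
  exact absurd this (by simpa using hx)

lemma resid (hg : Summable g0) (hsupp : Function.support g0 = {t : ℤ | 0 ≤ t})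
    (hP : 1 ≤ P) {b : ℤ} (hb0 : 0 ≤ b) (hb : b < 2*P) :
    ∑' σ : ℤ, (if (b - σ) % (2*P) = 0 then 2*g0 σ else 0)
      = ∑' m : ℕ, 2*g0 (b + 2*P*m) := by
  have h2P : (0:ℤ) < 2*P := by linarith
  set f : ℕ → ℤ := fun m => b + 2*P*(m:ℤ) with hf
  have hinj : Function.Injective f := by
    intro m m' h
    have h1 : 2*P*(m:ℤ) = 2*P*(m':ℤ) := by simpa [hf] using h
    have h2 : (m:ℤ) = (m':ℤ) := mul_left_cancel₀ (by linarith : (2*P:ℤ) ≠ 0) h1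
    exact_mod_cast h2
  have hrange : Function.support (fun σ : ℤ => if (b - σ) % (2*P) = 0 then 2*g0 σ else 0)
      ⊆ Set.range f := by
    intro σ hσ
    simp only [Function.mem_support] at hσ
    by_cases hc : (b - σ) % (2*P) = 0
    · obtain ⟨k, hk⟩ := Int.dvd_of_emod_eq_zero hc
      by_cases hk0 : k ≤ 0
      · refine ⟨(-k).toNat, ?_⟩
        have : ((-k).toNat : ℤ) = -k := Int.toNat_of_nonneg (by linarith)
        simp only [hf, this]; linarith
      · exfalso
        have hk1 : 1 ≤ k := by omega
        have hσneg : σ < 0 := by nlinarith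
        exact hσ (by rw [if_pos hc, gzero hsupp hσneg, mul_zero])
    · exact absurd (if_neg hc) hσ
  rw [← hinj.tsum_eq hrange]
  refine tsum_congr fun m => ?_
  have : (b - f m) % (2*P) = 0 := by
    have : b - f m = (2*P) * (-(m:ℤ)) := by simp only [hf]; ring
    rw [this, Int.mul_emod_right]
  rw [if_pos this]

lemma gmono_nat (hsupp : Function.support g0 = {t : ℤ | 0 ≤ t})
    (hdec : ∀ t : ℤ, 0 ≤ t → g0 (t + 1) < g0 t) :
    ∀ (k : ℕ) (x : ℤ), 0 ≤ x → g0 (x + (k:ℤ)) ≤ g0 x := by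
  intro k
  induction k with
  | zero => intro x hx; simp
  | succ k ih =>
      intro x hx
      have h1 : g0 ((x + (k:ℤ)) + 1) < g0 (x + (k:ℤ)) := hdec _ (by positivity)
      have h2 : g0 (x + (k:ℤ)) ≤ g0 x := ih x hx
      have : x + ((k:ℕ)+1 : ℕ) = (x + (k:ℤ)) + 1 := by push_cast; ring
      rw [this]; linarith

lemma gmonoP (hsupp : Function.support g0 = {t : ℤ | 0 ≤ t})
    (hdec : ∀ t : ℤ, 0 ≤ t → g0 (t + 1) < g0 t) (hP : 1 ≤ P)
    {x : ℤ} (hx : 0 ≤ x) : g0 (x + P) ≤ g0 x := by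
  have := gmono_nat hsupp hdec P.toNat x hx
  rwa [Int.toNat_of_nonneg (by linarith)] at this

lemma emod_iff (hP : 1 ≤ P) (y : ℤ) :
    y % (2*P) = P ↔ (y + P) % (2*P) = 0 := by
  have h2P : (0:ℤ) < 2*P := by linarith
  constructor
  · intro h
    have hx : 2*P*(y / (2*P)) + P = y := by
      have := Int.mul_ediv_add_emod y (2*P); rw [h] at this; linarith
    have : y + P = (2*P)*(y/(2*P) + 1) := by linarith
    rw [this, Int.mul_emod_right]
  · intro h
    obtain ⟨k, hk⟩ := Int.dvd_of_emod_eq_zero h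
    have : y = P + (2*P)*(k - 1) := by linarith
    rw [this, Int.add_mul_emod_self_left, Int.emod_eq_of_lt (by linarith) (by linarith)]

lemma Gmono (hg : Summable g0) (hsupp : Function.support g0 = {t : ℤ | 0 ≤ t})
    (hdec : ∀ t : ℤ, 0 ≤ t → g0 (t + 1) < g0 t) (hP : 1 ≤ P)
    (hs' : ∀ x : ℤ, s x = if x % (2*P) < P then (1:ℝ) else -1)
    {a : ℤ} (ha1 : 1 ≤ a) (ha : a < P) :
    G g0 s (a - 1) ≤ G g0 s a := by
  have habs := sabs hs'
  have hsum1 := sumG hg habs a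
  have hsum2 := sumG hg habs (a - 1)
  have hsumFp : Summable (fun σ : ℤ => if (a - σ) % (2*P) = 0 then 2*g0 σ else 0) := by
    apply Summable.of_norm_bounded (g := fun σ => 2*|g0 σ|) (hg.abs.mul_left 2)
    intro σ; rw [Real.norm_eq_abs]
    split_ifs
    · rw [abs_mul]; norm_num
    · simp
  have hsumFm : Summable (fun σ : ℤ => if (a - σ) % (2*P) = P then 2*g0 σ else 0) := by
    apply Summable.of_norm_bounded (g := fun σ => 2*|g0 σ|) (hg.abs.mul_left 2)
    intro σ; rw [Real.norm_eq_abs]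
    split_ifs
    · rw [abs_mul]; norm_num
    · simp
  have key : G g0 s a - G g0 s (a - 1)
      = (∑' σ : ℤ, (if (a - σ) % (2*P) = 0 then 2*g0 σ else 0))
        - (∑' σ : ℤ, (if (a - σ) % (2*P) = P then 2*g0 σ else 0)) := by
    unfold G
    rw [← Summable.tsum_sub hsum1 hsum2, ← Summable.tsum_sub hsumFp hsumFm]
    refine tsum_congr fun σ => ?_
    have h1 : a - 1 - σ = (a - σ) - 1 := by ring
    rw [h1, ← mul_sub, sdiff hP hs' (a - σ)]
    split_ifs <;> ring
  have hA : (∑' σ : ℤ, (if (a - σ) % (2*P) = 0 then 2*g0 σ else 0))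
      = ∑' m : ℕ, 2*g0 (a + 2*P*m) := resid hg hsupp hP (by linarith) (by linarith)
  have hBrw : (∑' σ : ℤ, (if (a - σ) % (2*P) = P then 2*g0 σ else 0))
      = ∑' σ : ℤ, (if ((a + P) - σ) % (2*P) = 0 then 2*g0 σ else 0) := by
    refine tsum_congr fun σ => ?_
    have h0 : ((a + P) - σ) = (a - σ) + P := by ring
    rw [h0]
    exact if_congr (emod_iff hP (a - σ)) rfl rfl
  have hB : (∑' σ : ℤ, (if (a - σ) % (2*P) = P then 2*g0 σ else 0))
      = ∑' m : ℕ, 2*g0 ((a + P) + 2*P*m) := by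
    rw [hBrw]; exact resid hg hsupp hP (by linarith) (by linarith)
  have hinj1 : Function.Injective (fun m : ℕ => a + 2*P*(m:ℤ)) := by
    intro m m' h
    simp only at h
    have h2 : (m:ℤ) = (m':ℤ) := mul_left_cancel₀ (by linarith : (2*P:ℤ) ≠ 0) (by linarith)
    exact_mod_cast h2
  have hinj2 : Function.Injective (fun m : ℕ => (a + P) + 2*P*(m:ℤ)) := by
    intro m m' h
    simp only at h
    have h2 : (m:ℤ) = (m':ℤ) := mul_left_cancel₀ (by linarith : (2*P:ℤ) ≠ 0) (by linarith)
    exact_mod_cast h2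
  have hsA : Summable (fun m : ℕ => 2*g0 (a + 2*P*m)) :=
    (hg.comp_injective hinj1).mul_left 2
  have hsB : Summable (fun m : ℕ => 2*g0 ((a + P) + 2*P*m)) :=
    (hg.comp_injective hinj2).mul_left 2
  have hle : (∑' m : ℕ, 2*g0 ((a + P) + 2*P*m)) ≤ ∑' m : ℕ, 2*g0 (a + 2*P*m) := by
    refine Summable.tsum_le_tsum (fun m => ?_) hsB hsA
    have h1 : (a + P) + 2*P*(m:ℤ) = (a + 2*P*(m:ℤ)) + P := by ring
    have h2 : g0 ((a + 2*P*(m:ℤ)) + P) ≤ g0 (a + 2*P*(m:ℤ)) :=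
      gmonoP hsupp hdec hP (by positivity)
    rw [h1]; linarith
  rw [hA, hB] at key
  linarith

lemma Gpos (hg : Summable g0) (hsupp : Function.support g0 = {t : ℤ | 0 ≤ t})
    (hdec : ∀ t : ℤ, 0 ≤ t → g0 (t + 1) < g0 t) (hP : 1 ≤ P)
    (hs' : ∀ x : ℤ, s x = if x % (2*P) < P then (1:ℝ) else -1)
    (hG0 : 0 < G g0 s 0) :
    ∀ r : ℤ, 0 ≤ r → r < P → 0 < G g0 s r := by
  have haux : ∀ k : ℕ, (k:ℤ) < P → 0 < G g0 s (k:ℤ) := by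
    intro k
    induction k with
    | zero => intro _; simpa using hG0
    | succ k ih =>
        intro hk
        have hk' : (k:ℤ) < P := by push_cast at hk ⊢; linarith
        have h1 : G g0 s ((k:ℤ)+1-1) ≤ G g0 s ((k:ℤ)+1) :=
          Gmono hg hsupp hdec hP hs' (by linarith) (by push_cast at hk; linarith)
        have h2 := ih hk'
        have : ((k+1:ℕ):ℤ) = (k:ℤ)+1 := by push_cast; ring
        rw [this]
        simp only [add_sub_cancel_right] at h1
        linarith
  intro r hr0 hr
  have := haux r.toNat (by rwa [Int.toNat_of_nonneg hr0])
  rwa [Int.toNat_of_nonneg hr0] at this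

lemma Gsign (hg : Summable g0) (hsupp : Function.support g0 = {t : ℤ | 0 ≤ t})
    (hdec : ∀ t : ℤ, 0 ≤ t → g0 (t + 1) < g0 t) (hP : 1 ≤ P)
    (hs' : ∀ x : ℤ, s x = if x % (2*P) < P then (1:ℝ) else -1)
    (hG0 : 0 < G g0 s 0) (t : ℤ) :
    Real.sign (G g0 s t) = s t := by
  have h2P : (0:ℤ) < 2*P := by linarith
  set r := t % (2*P) with hrdef
  have hr0 : 0 ≤ r := Int.emod_nonneg t (by linarith)
  have hrlt : r < 2*P := Int.emod_lt_of_pos t h2P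
  have hper : Function.Periodic (G g0 s) (2*P) := fun x => G2P hg hP hs' x
  have hGt : G g0 s t = G g0 s r := by
    have h := (hper.int_mul (t / (2*P))) r
    rw [Int.cast_id] at h
    have h2 : r + (t / (2*P)) * (2*P) = t := by
      have := Int.mul_ediv_add_emod t (2*P); linarith
    rw [h2] at h; exact h
  by_cases hc : r < P
  · have hpos := Gpos hg hsupp hdec hP hs' hG0 r hr0 hc
    rw [hGt, Real.sign_of_pos hpos, hs' t, ← hrdef, if_pos hc]
  · have h1 : G g0 s r = - G g0 s (r - P) := by
      have := GP hg hP hs' (r - P)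
      rw [show r - P + P = r by ring] at this
      rw [this]
    have hpos := Gpos hg hsupp hdec hP hs' hG0 (r - P) (by linarith) (by linarith)
    have hneg : G g0 s t < 0 := by rw [hGt, h1]; linarith
    rw [Real.sign_of_neg hneg, hs' t, ← hrdef, if_neg hc]

end Stmt15Aux


/-- For the delayed relay feedback system `u(t) = -C_{g₀}(sign(u))(t - P_d)` with
`P_d ≥ 1` and `g₀ ∈ ℓ¹` strictly positive and strictly decreasing on its support
`{0,1,2,…}`: a self-oscillation of period exactly `2P_d` with sign pattern
`[1,…,1 (P_d), -1,…,-1 (P_d)]` exists if and only if `C_{g₀}(sign(u))(0) > 0`,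
where `s` is the `2P_d`-periodic square wave with that sign pattern. -/
theorem stmt15 (Pd : ℕ) (hPd : 1 ≤ Pd)
    (g0 : ℤ → ℝ) (hg : Summable g0)
    (hsupp : Function.support g0 = {t : ℤ | 0 ≤ t})
    (hpos : ∀ t : ℤ, 0 ≤ t → 0 < g0 t)
    (hdec : ∀ t : ℤ, 0 ≤ t → g0 (t + 1) < g0 t)
    (s : ℤ → ℝ)
    (hs : s = fun t : ℤ => if t % ((2 * Pd : ℕ) : ℤ) < (Pd : ℤ) then 1 else -1) :
    (∃ u : ℤ → ℝ, (∀ t : ℤ, u (t + (2 * Pd : ℕ)) = u t) ∧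
      (∀ t : ℤ, u t = -conv g0 (fun τ => Real.sign (u τ)) (t - (Pd : ℤ))) ∧
      (∀ t : ℤ, Real.sign (u t) = s t)) ↔ 0 < conv g0 s 0 := by

  classical
  have hP : 1 ≤ (Pd:ℤ) := by exact_mod_cast hPd
  have hcast : ((2*Pd : ℕ) : ℤ) = 2*(Pd:ℤ) := by push_cast; ring
  have hs' : ∀ x : ℤ, s x = if x % (2*(Pd:ℤ)) < (Pd:ℤ) then (1:ℝ) else -1 := by
    intro x
    rw [hs]
    simp only [hcast]
  have hconvG : ∀ t, conv g0 s t = Stmt15Aux.G g0 s t := Stmt15Aux.convG hg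
  constructor
  · rintro ⟨u, hu1, hu2, hu3⟩
    have hcv : (fun τ => Real.sign (u τ)) = s := funext hu3
    have h2 := hu2 0
    rw [hcv, hconvG] at h2
    have hGP := Stmt15Aux.GP (s := s) hg hP hs' (0 - (Pd:ℤ))
    rw [show 0 - (Pd:ℤ) + (Pd:ℤ) = 0 by ring] at hGP
    have h3 : u 0 = Stmt15Aux.G g0 s 0 := by rw [h2]; linarith
    have h4 : Real.sign (u 0) = 1 := by
      rw [hu3 0, hs' 0, Int.zero_emod, if_pos (by linarith)]
    have h5 : 0 < u 0 := by
      rcases lt_trichotomy (u 0) 0 with h|h|h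
      · rw [Real.sign_of_neg h] at h4; norm_num at h4
      · rw [h, Real.sign_zero] at h4; norm_num at h4
      · exact h
    rw [hconvG, ← h3]
    exact h5
  · intro hc
    have hG0 : 0 < Stmt15Aux.G g0 s 0 := by rw [← hconvG]; exact hc
    have hsign := Stmt15Aux.Gsign hg hsupp hdec hP hs' hG0
    refine ⟨Stmt15Aux.G g0 s, ?_, ?_, hsign⟩
    · intro t
      have h := Stmt15Aux.G2P (s := s) hg hP hs' t
      rw [show (t + ((2*Pd:ℕ):ℤ)) = t + 2*(Pd:ℤ) by rw [hcast]]
      exact h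
    · intro t
      have hcv : (fun τ => Real.sign (Stmt15Aux.G g0 s τ)) = s := funext hsign
      rw [hcv, hconvG]
      have h := Stmt15Aux.GP (s := s) hg hP hs' (t - (Pd:ℤ))
      rw [show t - (Pd:ℤ) + (Pd:ℤ) = t by ring] at h
      linarith
end

section
/- Let P = 2n with n ≥ 2, let ḡ ∈ ℝ^P be strictly positive, strictly decreasing, and convex (ḡ_{i+1} − ḡ_i ≥ ḡ_i − ḡ_{i−1} is replaced by the discrete convexity ḡ_{i−1} + ḡ_{i+1} ≥ 2ḡ_i for interior i), and let m = ⌈P/4⌉. Then for every 1 ≤ i ≤ P/2 − m it holds that ḡ_i + ḡ_{P+1−i} ≥ ḡ_{P/2+i} + ḡ_{P/2−i+1}; consequently, with û = [1_{P/2}ᵀ, −1_{P/2}ᵀ]ᵀ, the entry −∑_{i=1}^{m} ḡ_i + ∑_{i=m+1}^{m+P/2} ḡ_i − ∑_{i=m+P/2+1}^{P} ḡ_i is ≤ 0. -/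
open scoped BigOperators

/-- For `P = 2n`, `n ≥ 2`, and `ḡ` (indexed 1-based on `1,…,P`) strictly positive,
strictly decreasing and discretely convex, with `m = ⌈P/4⌉`: for every
`1 ≤ i ≤ P/2 - m`, `ḡ_i + ḡ_{P+1-i} ≥ ḡ_{P/2+i} + ḡ_{P/2-i+1}`; consequently
`-∑_{i=1}^{m} ḡ_i + ∑_{i=m+1}^{m+P/2} ḡ_i - ∑_{i=m+P/2+1}^{P} ḡ_i ≤ 0`. -/
theorem stmt19 (n : ℕ) (hn : 2 ≤ n) (g : ℕ → ℝ)
    (hpos : ∀ i : ℕ, 1 ≤ i → i ≤ 2 * n → 0 < g i)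
    (hdec : ∀ i : ℕ, 1 ≤ i → i + 1 ≤ 2 * n → g (i + 1) < g i)
    (hconv : ∀ i : ℕ, 2 ≤ i → i + 1 ≤ 2 * n → 2 * g i ≤ g (i - 1) + g (i + 1))
    (m : ℕ) (hm : m = (2 * n + 3) / 4) :
    (∀ i : ℕ, 1 ≤ i → i ≤ n - m →
      g (n + i) + g (n - i + 1) ≤ g i + g (2 * n + 1 - i)) ∧
    (-(∑ i ∈ Finset.Icc 1 m, g i) + (∑ i ∈ Finset.Icc (m + 1) (m + n), g i)
      - (∑ i ∈ Finset.Icc (m + n + 1) (2 * n), g i) ≤ 0) := by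
  -- differences are nondecreasing
  have hd : ∀ j k : ℕ, 1 ≤ j → j ≤ k → k + 1 ≤ 2 * n →
      g (j + 1) - g j ≤ g (k + 1) - g k := by
    intro j k hj hjk hk
    induction k with
    | zero => exact absurd hjk (by omega)
    | succ k ih =>
      rcases Nat.lt_or_ge j (k + 1) with h | h
      · have h1 := ih (by omega) (by omega)
        have h2 := hconv (k + 1) (by omega) (by omega)
        simp only [Nat.add_sub_cancel] at h2
        linarith
      · have hjk' : j = k + 1 := by omega
        subst hjk'
        exact le_refl _
  -- telescoping
  have htel : ∀ a t : ℕ, g (a + t) =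
      g a + ∑ j ∈ Finset.range t, (g (a + j + 1) - g (a + j)) := by
    intro a t
    induction t with
    | zero => simp
    | succ t ih =>
      rw [Finset.sum_range_succ]
      have e : a + (t + 1) = a + t + 1 := rfl
      rw [e]
      linarith [ih]
  -- pairing inequality
  have hpair : ∀ a c t : ℕ, 1 ≤ a → a + t ≤ c → c + t ≤ 2 * n →
      g (a + t) + g c ≤ g a + g (c + t) := by
    intro a c t ha hac hc
    have h1 := htel a t
    have h2 := htel c t
    have hsum : ∑ j ∈ Finset.range t, (g (a + j + 1) - g (a + j)) ≤
        ∑ j ∈ Finset.range t, (g (c + j + 1) - g (c + j)) := by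
      apply Finset.sum_le_sum
      intro j hj
      have hj' := Finset.mem_range.mp hj
      exact hd (a + j) (c + j) (by omega) (by omega) (by omega)
    linarith
  -- monotonicity
  have hmono : ∀ a b : ℕ, 1 ≤ a → a ≤ b → b ≤ 2 * n → g b ≤ g a := by
    intro a b ha hab hb
    induction b with
    | zero => exact absurd hab (by omega)
    | succ b ih =>
      rcases Nat.lt_or_ge a (b + 1) with h | h
      · have h1 := ih (by omega) (by omega)
        have h2 := hdec b (by omega) (by omega)
        linarith
      · have : a = b + 1 := by omega
        subst this; exact le_refl _
  -- part 1
  have part1 : ∀ i : ℕ, 1 ≤ i → i ≤ n - m →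
      g (n + i) + g (n - i + 1) ≤ g i + g (2 * n + 1 - i) := by
    intro i hi1 hi2
    have h2i : 2 * i ≤ n := by omega
    have key := hpair i (n + i) (n + 1 - 2 * i) hi1 (by omega) (by omega)
    have e1 : i + (n + 1 - 2 * i) = n - i + 1 := by omega
    have e2 : n + i + (n + 1 - 2 * i) = 2 * n + 1 - i := by omega
    rw [e1, e2] at key
    linarith
  refine ⟨part1, ?_⟩
  -- part 2
  set k := n - m with hk
  have hk1 : 1 ≤ k := by omega
  have hkm : k ≤ m := by omega
  have hmk : m + k = n := by omega
  have hmn : m ≤ n := by omega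
  have hA : ∑ i ∈ Finset.Icc 1 m, g i = ∑ j ∈ Finset.range m, g (1 + j) := by
    rw [← Finset.Ico_add_one_right_eq_Icc, Finset.sum_Ico_eq_sum_range,
      show m + 1 - 1 = m from by omega]
  have hM : ∑ i ∈ Finset.Icc (m + 1) (m + n), g i
      = ∑ j ∈ Finset.range n, g (m + 1 + j) := by
    rw [← Finset.Ico_add_one_right_eq_Icc, Finset.sum_Ico_eq_sum_range,
      show m + n + 1 - (m + 1) = n from by omega]
  have hB : ∑ i ∈ Finset.Icc (m + n + 1) (2 * n), g i
      = ∑ j ∈ Finset.range k, g (m + n + 1 + j) := by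
    rw [← Finset.Ico_add_one_right_eq_Icc, Finset.sum_Ico_eq_sum_range,
      show 2 * n + 1 - (m + n + 1) = k from by omega]
  -- split A
  have hA2 : ∑ j ∈ Finset.range m, g (1 + j)
      = ∑ j ∈ Finset.range k, g (1 + j) + ∑ j ∈ Finset.range (m - k), g (1 + k + j) := by
    conv_lhs => rw [show m = k + (m - k) by omega, Finset.sum_range_add]
    congr 1
    apply Finset.sum_congr rfl
    intro j _
    congr 1
    omega
  -- split M
  have hM2 : ∑ j ∈ Finset.range n, g (m + 1 + j)
      = ∑ j ∈ Finset.range k, g (m + 1 + j) + ∑ j ∈ Finset.range k, g (n + 1 + j)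
        + ∑ j ∈ Finset.range (m - k), g (n + k + 1 + j) := by
    conv_lhs => rw [show n = k + (k + (m - k)) by omega, Finset.sum_range_add,
      Finset.sum_range_add]
    rw [add_assoc]
    congr 1
    congr 1
    · apply Finset.sum_congr rfl
      intro j _
      congr 1
      omega
    · apply Finset.sum_congr rfl
      intro j _
      congr 1
      omega
  -- reflect first block of M
  have hrefl1 : ∑ j ∈ Finset.range k, g (m + 1 + j)
      = ∑ j ∈ Finset.range k, g (n - j) := by
    rw [← Finset.sum_range_reflect (fun j => g (n - j)) k]
    apply Finset.sum_congr rfl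
    intro j hj
    have := Finset.mem_range.mp hj
    congr 1
    omega
  -- reflect B
  have hrefl2 : ∑ j ∈ Finset.range k, g (m + n + 1 + j)
      = ∑ j ∈ Finset.range k, g (2 * n - j) := by
    rw [← Finset.sum_range_reflect (fun j => g (2 * n - j)) k]
    apply Finset.sum_congr rfl
    intro j hj
    have := Finset.mem_range.mp hj
    congr 1
    omega
  -- main comparisons
  have comp1 : ∑ j ∈ Finset.range k, (g (n - j) + g (n + 1 + j))
      ≤ ∑ j ∈ Finset.range k, (g (1 + j) + g (2 * n - j)) := by
    apply Finset.sum_le_sum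
    intro j hj
    have hjk : j < k := Finset.mem_range.mp hj
    have := part1 (j + 1) (by omega) (by omega)
    have e1 : n + (j + 1) = n + 1 + j := by omega
    have e2 : n - (j + 1) + 1 = n - j := by omega
    have e3 : 2 * n + 1 - (j + 1) = 2 * n - j := by omega
    rw [e1, e2, e3] at this
    have e4 : (j + 1) = 1 + j := by omega
    rw [e4] at this
    linarith
  have comp2 : ∑ j ∈ Finset.range (m - k), g (n + k + 1 + j)
      ≤ ∑ j ∈ Finset.range (m - k), g (1 + k + j) := by
    apply Finset.sum_le_sum
    intro j hj
    have hjk : j < m - k := Finset.mem_range.mp hj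
    exact hmono (1 + k + j) (n + k + 1 + j) (by omega) (by omega) (by omega)
  rw [Finset.sum_add_distrib, Finset.sum_add_distrib] at comp1
  rw [hA, hB, hM, hA2, hM2, hrefl1, hrefl2]
  linarith
end
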